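/- arXiv:1307.4532 — 7 statements merged into one kernel-verified Lean document; each statement's English description precedes it below -/
import Mathlib

section
/- Let q be a prime power, F the finite field with q elements, and K a field extension of F with q² elements. Let S ⊆ K be a finite subset that contains no conjugate pair. Let D ⊆ F^S be the F-span of the three vectors r₀ = (1)_{x∈S}, r₁ = (x^q + x)_{x∈S}, and r₂ = (x^{q+1})_{x∈S} (all of whose entries lie in F). Then every nonzero vector of the Euclidean dual D^⊥ ⊆ F^S has Hamming weight at least 3. -/
/-- The Euclidean dual of a linear code `C ⊆ F^ι`. -/
noncomputable def dualCode {F : Type*} [Field F] {ι : Type*} [Fintype ι]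
    (C : Submodule F (ι → F)) : Submodule F (ι → F) where
  carrier := {u | ∀ v ∈ C, ∑ i, u i * v i = 0}
  add_mem' := by
    intro a b ha hb v hv
    have h : ∑ i, (a i + b i) * v i = (∑ i, a i * v i) + ∑ i, b i * v i := by
      rw [← Finset.sum_add_distrib]
      exact Finset.sum_congr rfl fun i _ => add_mul _ _ _
    simp [h, ha v hv, hb v hv]
  zero_mem' := by
    intro v hv
    simp
  smul_mem' := by
    intro c a ha v hv
    have h : ∑ i, (c * a i) * v i = c * ∑ i, a i * v i := by
      rw [Finset.mul_sum]
      exact Finset.sum_congr rfl fun i _ => mul_assoc _ _ _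
    simp [smul_eq_mul, h, ha v hv]

/-- The minimum distance of a linear code: the least Hamming weight of a
nonzero codeword. -/
noncomputable def minDist {F : Type*} [Field F] [DecidableEq F] {ι : Type*} [Fintype ι]
    (C : Submodule F (ι → F)) : ℕ :=
  sInf {w | ∃ v ∈ C, v ≠ 0 ∧ hammingNorm v = w}

/-- Let `q` be a prime power, `F = F_q`, `K = F_{q²}`, and `S ⊆ K` a finite subset
containing no conjugate pair.  Let `D ⊆ F^S` be the `F`-span of the vectors
`(1)_{x∈S}`, `(x^q + x)_{x∈S}` and `(x^{q+1})_{x∈S}` (whose entries lie in `F`,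
witnessed by the functions `τ, ν : K → F`).  Then every nonzero vector of the
Euclidean dual `D^⊥` has Hamming weight at least `3`. -/
theorem statement5 {q : ℕ} (hq : ∃ p e : ℕ, p.Prime ∧ 0 < e ∧ q = p ^ e)
    (F K : Type*) [Field F] [Fintype F] [DecidableEq F]
    [Field K] [Fintype K] [Algebra F K]
    (hF : Fintype.card F = q) (hK : Fintype.card K = q ^ 2)
    (S : Finset K) (hS : ∀ x ∈ S, ∀ y ∈ S, x ≠ y → y ≠ x ^ q)
    (τ ν : K → F)
    (hτ : ∀ x : K, algebraMap F K (τ x) = x ^ q + x)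
    (hν : ∀ x : K, algebraMap F K (ν x) = x ^ (q + 1))
    (D : Submodule F (S → F))
    (hD : D = Submodule.span F
      ({fun _ => 1, fun x : S => τ (x : K), fun x : S => ν (x : K)} : Set (S → F))) :
    ∀ u ∈ dualCode D, u ≠ 0 → 3 ≤ hammingNorm u := by
  classical
  intro u hu hne
  by_contra hlt
  push_neg at hlt
  have h1 : (fun _ : S => (1 : F)) ∈ D := by
    rw [hD]; exact Submodule.subset_span (by simp)
  have h2 : (fun x : S => τ (x : K)) ∈ D := by
    rw [hD]; exact Submodule.subset_span (by simp)
  have h3 : (fun x : S => ν (x : K)) ∈ D := by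
    rw [hD]; exact Submodule.subset_span (by simp)
  set s : Finset S := Finset.univ.filter (fun i => u i ≠ 0) with hs
  have hnorm : hammingNorm u = s.card := rfl
  have hmem : ∀ i : S, u i ≠ 0 → i ∈ s := by
    intro i hi; simp [hs, hi]
  have hsum : ∀ v : S → F, v ∈ D → ∑ i ∈ s, u i * v i = 0 := by
    intro v hv
    rw [Finset.sum_filter_of_ne (by intro i _ h hui; exact h (by rw [hui, zero_mul]))]
    exact hu v hv
  have hcard : s.card ≤ 2 := by omega
  interval_cases hc : s.card
  · -- card 0 : u = 0
    apply hne
    funext i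
    by_contra hui
    have : i ∈ s := hmem i hui
    rw [Finset.card_eq_zero.mp hc] at this
    exact absurd this (Finset.notMem_empty i)
  · -- card 1
    obtain ⟨a, ha⟩ := Finset.card_eq_one.mp hc
    have hua : u a ≠ 0 := by
      have : a ∈ s := by rw [ha]; exact Finset.mem_singleton_self a
      exact (Finset.mem_filter.mp this).2
    have := hsum _ h1
    rw [ha, Finset.sum_singleton, mul_one] at this
    exact hua this
  · -- card 2
    obtain ⟨a, b, hab, hsab⟩ := Finset.card_eq_two.mp hc
    have hua : u a ≠ 0 := (Finset.mem_filter.mp (by rw [hsab]; simp : a ∈ s)).2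
    have hub : u b ≠ 0 := (Finset.mem_filter.mp (by rw [hsab]; simp : b ∈ s)).2
    have e1 := hsum _ h1
    have e2 := hsum _ h2
    have e3 := hsum _ h3
    rw [hsab, Finset.sum_pair hab] at e1 e2 e3
    simp only [mul_one] at e1
    have hub' : u b = -u a := by linear_combination e1
    rw [hub'] at e2 e3
    have hτab : τ (a : K) = τ (b : K) := by
      have h' : u a * (τ (a : K) - τ (b : K)) = 0 := by linear_combination e2
      rcases mul_eq_zero.mp h' with h | h
      · exact absurd h hua
      · exact sub_eq_zero.mp h
    have hνab : ν (a : K) = ν (b : K) := by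
      have h' : u a * (ν (a : K) - ν (b : K)) = 0 := by linear_combination e3
      rcases mul_eq_zero.mp h' with h | h
      · exact absurd h hua
      · exact sub_eq_zero.mp h
    set x : K := (a : K)
    set y : K := (b : K)
    have hxy : x ≠ y := fun h => hab (Subtype.ext h)
    have htr : x ^ q + x = y ^ q + y := by
      rw [← hτ, ← hτ, hτab]
    have hn : x ^ (q + 1) = y ^ (q + 1) := by
      rw [← hν, ← hν, hνab]
    have key : (y - x) * (y - x ^ q) = 0 := by
      have h0 : (y - x) * (y - x ^ q) = y ^ 2 - (x ^ q + x) * y + x ^ (q + 1) := by ring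
      rw [h0, htr, hn]; ring
    rcases mul_eq_zero.mp key with h | h
    · exact hxy (sub_eq_zero.mp h).symm
    · exact hS x a.2 y b.2 hxy (sub_eq_zero.mp h)
end

section
/- Let K be a field and q a positive integer. Let a, b, c ∈ K be pairwise distinct and pairwise non-conjugate (i.e., b ≠ a^q, a ≠ b^q, c ≠ a^q, a ≠ c^q, c ≠ b^q, b ≠ c^q). Then the three vectors v(y) = (1, y^q + y, (y^q + y)², y^{q+1}, y^{2(q+1)}) ∈ K⁵, for y = a, b, c, are linearly independent over K. -/
/-!
An element `y` enters `v(y)` only through its trace-norm pair `(T, N) = (y^q + y, y^{q+1})`,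
as `(1, T, T², N, N²)`. Since `y` and `y^q` are the roots of `X² - T X + N`, the hypotheses
make the three pairs distinct. For three distinct points of the plane and any one of them
there is a function in the span of `1, T, T², N, N²` vanishing at the other two but not at
it: `(T - T₁)(T - T₂)`, `(N - N₁)(N - N₂)`, or, if the point shares its `T` with one of the
others and its `N` with the other one, the line through the other two.
-/

/-- The vector `(1, y^q + y, (y^q + y)², y^{q+1}, y^{2(q+1)}) ∈ K⁵`. -/
def traceNormVec5 (K : Type*) [Field K] (q : ℕ) (y : K) : Fin 5 → K :=
  ![1, y ^ q + y, (y ^ q + y) ^ 2, y ^ (q + 1), y ^ (2 * (q + 1))]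

open Matrix

section

variable {K : Type*} [Field K]

def traceNorm (q : ℕ) (y : K) : K × K := (y ^ q + y, y ^ (q + 1))

theorem traceNorm_ne {q : ℕ} {a b : K} (hab : a ≠ b) (hba : b ≠ a ^ q) :
    traceNorm q a ≠ traceNorm q b := by
  intro h
  obtain ⟨hT, hN⟩ := Prod.ext_iff.1 h
  have hroot : (b - a) * (b - a ^ q) = 0 := by
    simp only [traceNorm] at hT hN
    linear_combination (-b) * hT + hN
  rcases mul_eq_zero.1 hroot with h | h
  · exact hab (sub_eq_zero.1 h).symm
  · exact hba (sub_eq_zero.1 h)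

def momentVec (P : K × K) : Fin 5 → K := ![1, P.1, P.1 ^ 2, P.2, P.2 ^ 2]

theorem traceNormVec5_eq_momentVec (q : ℕ) (y : K) :
    traceNormVec5 K q y = momentVec (traceNorm q y) := by
  ext i
  fin_cases i <;> simp [traceNormVec5, momentVec, traceNorm, pow_mul']

theorem dotProduct_momentVec (c : Fin 5 → K) (P : K × K) :
    c ⬝ᵥ momentVec P = c 0 + c 1 * P.1 + c 2 * P.1 ^ 2 + c 3 * P.2 + c 4 * P.2 ^ 2 := by
  simp [dotProduct, Fin.sum_univ_five, momentVec, add_assoc]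

theorem exists_dotProduct_momentVec_ne_zero_and_eq_zero {P Q R : K × K}
    (hPQ : P ≠ Q) (hPR : P ≠ R) :
    ∃ c : Fin 5 → K, c ⬝ᵥ momentVec P ≠ 0 ∧ c ⬝ᵥ momentVec Q = 0 ∧ c ⬝ᵥ momentVec R = 0 := by
  by_cases hT : P.1 ≠ Q.1 ∧ P.1 ≠ R.1
  · refine ⟨![Q.1 * R.1, -(Q.1 + R.1), 1, 0, 0], ?_, ?_, ?_⟩ <;>
      simp only [dotProduct_momentVec, cons_val]
    · convert mul_ne_zero (sub_ne_zero.2 hT.1) (sub_ne_zero.2 hT.2) using 1; ring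
    all_goals ring
  by_cases hN : P.2 ≠ Q.2 ∧ P.2 ≠ R.2
  · refine ⟨![Q.2 * R.2, 0, 0, -(Q.2 + R.2), 1], ?_, ?_, ?_⟩ <;>
      simp only [dotProduct_momentVec, cons_val]
    · convert mul_ne_zero (sub_ne_zero.2 hN.1) (sub_ne_zero.2 hN.2) using 1; ring
    all_goals ring
  have hP : (P.1 = Q.1 ∧ P.2 = R.2) ∨ (P.1 = R.1 ∧ P.2 = Q.2) := by
    rw [Ne, Prod.ext_iff] at hPQ hPR
    tauto
  refine ⟨![(R.1 - Q.1) * Q.2 - (R.2 - Q.2) * Q.1, R.2 - Q.2, 0, -(R.1 - Q.1), 0], ?_, ?_, ?_⟩ <;>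
    simp only [dotProduct_momentVec, cons_val]
  · rcases hP with ⟨h1, h2⟩ | ⟨h1, h2⟩
    · have hR1 : R.1 ≠ Q.1 := fun h => hPR (Prod.ext (h1.trans h.symm) h2)
      have hR2 : R.2 ≠ Q.2 := fun h => hPQ (Prod.ext h1 (h2.trans h))
      convert neg_ne_zero.2 (mul_ne_zero (sub_ne_zero.2 hR1) (sub_ne_zero.2 hR2)) using 1
      rw [h1, h2]; ring
    · have hR1 : R.1 ≠ Q.1 := fun h => hPQ (Prod.ext (h1.trans h) h2)
      have hR2 : R.2 ≠ Q.2 := fun h => hPR (Prod.ext h1 (h2.trans h.symm))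
      convert mul_ne_zero (sub_ne_zero.2 hR2) (sub_ne_zero.2 hR1) using 1
      rw [h1, h2]; ring
  all_goals ring

theorem eq_zero_of_dotProduct_separates {n : ℕ} {u v w c : Fin n → K} {x y z : K}
    (h : x • u + y • v + z • w = 0) (hu : c ⬝ᵥ u ≠ 0) (hv : c ⬝ᵥ v = 0) (hw : c ⬝ᵥ w = 0) :
    x = 0 := by
  have hc := congrArg (c ⬝ᵥ ·) h
  simp only [dotProduct_add, dotProduct_smul, hv, hw, smul_eq_mul, mul_zero, add_zero,
    dotProduct_zero] at hc
  exact (mul_eq_zero.1 hc).resolve_right hu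

theorem linearIndependent_momentVec {P Q R : K × K} (hPQ : P ≠ Q) (hPR : P ≠ R) (hQR : Q ≠ R) :
    LinearIndependent K ![momentVec P, momentVec Q, momentVec R] := by
  rw [Fintype.linearIndependent_iff]
  intro g hg
  simp only [Fin.sum_univ_three, cons_val_zero, cons_val_one, cons_val_two, tail_cons,
    head_cons] at hg
  obtain ⟨cP, hcP⟩ := exists_dotProduct_momentVec_ne_zero_and_eq_zero hPQ hPR
  obtain ⟨cQ, hcQ⟩ := exists_dotProduct_momentVec_ne_zero_and_eq_zero hPQ.symm hQR
  obtain ⟨cR, hcR⟩ := exists_dotProduct_momentVec_ne_zero_and_eq_zero hPR.symm hQR.symm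
  intro i
  fin_cases i
  · exact eq_zero_of_dotProduct_separates hg hcP.1 hcP.2.1 hcP.2.2
  · exact eq_zero_of_dotProduct_separates (x := g 1) (y := g 0) (z := g 2)
      (by rw [← hg]; abel) hcQ.1 hcQ.2.1 hcQ.2.2
  · exact eq_zero_of_dotProduct_separates (x := g 2) (y := g 0) (z := g 1)
      (by rw [← hg]; abel) hcR.1 hcR.2.1 hcR.2.2

end

theorem statement7_general (K : Type*) [Field K] (q : ℕ) (a b c : K)
    (hab : a ≠ b) (hac : a ≠ c) (hbc : b ≠ c)
    (hba : b ≠ a ^ q)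
    (hca : c ≠ a ^ q)
    (hcb : c ≠ b ^ q) :
    LinearIndependent K
      ![traceNormVec5 K q a, traceNormVec5 K q b, traceNormVec5 K q c] := by
  simp only [traceNormVec5_eq_momentVec]
  exact linearIndependent_momentVec (traceNorm_ne hab hba) (traceNorm_ne hac hca)
    (traceNorm_ne hbc hcb)

/-- Let `K` be a field and `q` a positive integer.  If `a, b, c ∈ K` are pairwise
distinct and pairwise non-conjugate, then the three vectors
`(1, y^q + y, (y^q + y)², y^{q+1}, y^{2(q+1)})`, for `y = a, b, c`, are linearly
independent over `K`. -/
theorem statement7 (K : Type*) [Field K] (q : ℕ) (hq : 0 < q) (a b c : K)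
    (hab : a ≠ b) (hac : a ≠ c) (hbc : b ≠ c)
    (hba : b ≠ a ^ q) (hab' : a ≠ b ^ q)
    (hca : c ≠ a ^ q) (hac' : a ≠ c ^ q)
    (hcb : c ≠ b ^ q) (hbc' : b ≠ c ^ q) :
    LinearIndependent K
      ![traceNormVec5 K q a, traceNormVec5 K q b, traceNormVec5 K q c] :=
  statement7_general K q a b c hab hac hbc hba hca hcb
end

section
/- Let q be a prime power, F the finite field with q elements, and K a field extension of F with q² elements. Let S ⊆ K be a finite subset that contains no conjugate pair. Let E ⊆ F^S be the F-span of the five vectors (1)_{x∈S}, (x^q + x)_{x∈S}, ((x^q + x)²)_{x∈S}, (x^{q+1})_{x∈S}, and (x^{2(q+1)})_{x∈S} (all of whose entries lie in F). Then every nonzero vector of the Euclidean dual E^⊥ ⊆ F^S has Hamming weight at least 4. -/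
/-!
Both `τ = x^q + x` and `ν = x^{q+1}` are checked up to degree 2 by the code, and a
vector orthogonal to `1, f, f²` with at most three nonzero entries must repeat every
value of `f` on its support (evaluate against the interpolation polynomial vanishing
at the other support points). Since `x ↦ (τ x, ν x)` is injective on a set without
conjugate pairs (`x` and `x^q` are the only roots of `X² - τ X + ν`), a nonzero entry
`i` has a `τ`-partner `j` and a `ν`-partner `k`, and `j` has a `ν`-partner `m`; these
four support points are distinct.
-/

open Polynomial Finset

section ParityCheck

variable {ι R : Type*} [Fintype ι] [CommRing R]

theorem sum_mul_eval_eq_zero_of_natDegree_lt {n : ℕ} {u f : ι → R} {p : R[X]}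
    (hp : p.natDegree < n) (horth : ∀ k < n, ∑ j, u j * f j ^ k = 0) :
    ∑ j, u j * p.eval (f j) = 0 := by
  simp_rw [eval_eq_sum_range' hp, Finset.mul_sum]
  rw [Finset.sum_comm]
  refine Finset.sum_eq_zero fun k hk => ?_
  simp_rw [mul_left_comm (u _), ← Finset.mul_sum, horth k (mem_range.mp hk), mul_zero]

variable [IsDomain R] [DecidableEq R]

theorem exists_ne_apply_eq_of_sum_mul_pow_eq_zero {n : ℕ} {u f : ι → R}
    (hwt : hammingNorm u ≤ n) (horth : ∀ k < n, ∑ j, u j * f j ^ k = 0)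
    {i : ι} (hi : u i ≠ 0) : ∃ j, j ≠ i ∧ u j ≠ 0 ∧ f j = f i := by
  classical
  by_contra! hsep
  set s := ({j | u j ≠ 0} : Finset ι).erase i
  have hcard : #s < n := by
    have : #s + 1 = hammingNorm u := card_erase_add_one (by simpa using hi)
    omega
  have hsum := sum_mul_eval_eq_zero_of_natDegree_lt
    (p := ∏ l ∈ s, (X - C (f l))) (by simpa using hcard) horth
  rw [Finset.sum_eq_single i] at hsum
  · refine mul_ne_zero hi ?_ hsum
    simp only [eval_prod, eval_sub, eval_X, eval_C, prod_ne_zero_iff, sub_ne_zero]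
    intro l hl
    have hl' := mem_erase.mp hl
    exact (hsep l hl'.1 (by simpa using hl'.2)).symm
  · intro j _ hji
    by_cases hj : u j = 0
    · rw [hj, zero_mul]
    · refine mul_eq_zero_of_right _ ?_
      simp only [eval_prod, eval_sub, eval_X, eval_C]
      exact prod_eq_zero (mem_erase.mpr ⟨hji, by simpa using hj⟩) (sub_self _)
  · simp

theorem four_le_hammingNorm_of_sum_mul_pow_eq_zero {u f g : ι → R}
    (hfg : ∀ i j, f i = f j → g i = g j → i = j)
    (hf : ∀ k < 3, ∑ j, u j * f j ^ k = 0) (hg : ∀ k < 3, ∑ j, u j * g j ^ k = 0)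
    (hu : u ≠ 0) : 4 ≤ hammingNorm u := by
  classical
  by_contra! hlt
  have hwt : hammingNorm u ≤ 3 := by omega
  obtain ⟨i, hi⟩ : ∃ i, u i ≠ 0 := Function.ne_iff.mp hu
  obtain ⟨j, hji, hj, hfj⟩ := exists_ne_apply_eq_of_sum_mul_pow_eq_zero hwt hf hi
  obtain ⟨k, hki, hk, hgk⟩ := exists_ne_apply_eq_of_sum_mul_pow_eq_zero hwt hg hi
  obtain ⟨m, hmj, hm, hgm⟩ := exists_ne_apply_eq_of_sum_mul_pow_eq_zero hwt hg hj
  have hgj : g j ≠ g i := fun h => hji (hfg _ _ hfj h)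
  have hfk : f k ≠ f i := fun h => hki (hfg _ _ h hgk)
  have hsub : ({i, j, k, m} : Finset ι) ⊆ ({x | u x ≠ 0} : Finset ι) := by
    simp [insert_subset_iff, hi, hj, hk, hm]
  have hfour : #({i, j, k, m} : Finset ι) = 4 :=
    card_eq_four.mpr ⟨i, j, k, m, by grind, by grind, by grind, by grind, by grind, by grind, rfl⟩
  exact hlt.not_ge (hfour ▸ card_le_card hsub)

end ParityCheck

theorem eq_or_eq_pow_of_pow_add_eq_of_pow_succ_eq {K : Type*} [CommRing K] [IsDomain K]
    {q : ℕ} {x y : K} (htr : y ^ q + y = x ^ q + x) (hnorm : y ^ (q + 1) = x ^ (q + 1)) :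
    y = x ∨ y = x ^ q := by
  have h : (y - x) * (y - x ^ q) = 0 := by
    linear_combination y * htr - hnorm
  exact (mul_eq_zero.mp h).imp sub_eq_zero.mp sub_eq_zero.mp

theorem statement8_general {q : ℕ}
    (F K : Type*) [Field F] [DecidableEq F]
    [Field K] [Algebra F K]
    (S : Finset K) (hS : ∀ x ∈ S, ∀ y ∈ S, x ≠ y → y ≠ x ^ q)
    (τ ν : K → F)
    (hτ : ∀ x : K, algebraMap F K (τ x) = x ^ q + x)
    (hν : ∀ x : K, algebraMap F K (ν x) = x ^ (q + 1))
    (E : Submodule F (S → F))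
    (hE : E = Submodule.span F
      ({fun _ => 1, fun x : S => τ (x : K), fun x : S => (τ (x : K)) ^ 2,
        fun x : S => ν (x : K), fun x : S => (ν (x : K)) ^ 2} : Set (S → F))) :
    ∀ u ∈ dualCode E, u ≠ 0 → 4 ≤ hammingNorm u := by
  subst hE
  intro u hu hne
  have hinj : ∀ x y : S, τ x = τ y → ν x = ν y → x = y := by
    intro x y htr hnorm
    by_contra hxy
    rcases eq_or_eq_pow_of_pow_add_eq_of_pow_succ_eq (x := (x : K)) (y := y)
        (by rw [← hτ x, ← hτ y, htr]) (by rw [← hν x, ← hν y, hnorm]) with h | h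
    · exact hxy (Subtype.ext h.symm)
    · exact hS x x.2 y y.2 (fun h' => hxy (Subtype.ext h')) h
  have horth : ∀ v : S → F, v ∈ _ → ∑ i, u i * v i = 0 :=
    fun v hv => hu v (Submodule.subset_span hv)
  refine four_le_hammingNorm_of_sum_mul_pow_eq_zero hinj ?_ ?_ hne
  all_goals
    intro k hk
    interval_cases k
  · simpa using horth (fun _ => 1) (by simp)
  · simpa using horth (fun x : S => τ x) (by simp)
  · exact horth (fun x : S => τ x ^ 2) (by simp)
  · simpa using horth (fun _ => 1) (by simp)
  · simpa using horth (fun x : S => ν x) (by simp)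
  · exact horth (fun x : S => ν x ^ 2) (by simp)

/-- Let `q` be a prime power, `F = F_q`, `K = F_{q²}`, and `S ⊆ K` a finite subset
containing no conjugate pair.  Let `E ⊆ F^S` be the `F`-span of the five vectors
`(1)_{x∈S}`, `(x^q + x)_{x∈S}`, `((x^q + x)²)_{x∈S}`, `(x^{q+1})_{x∈S}` and
`(x^{2(q+1)})_{x∈S}` (whose entries lie in `F`, witnessed by `τ, ν : K → F`).
Then every nonzero vector of the Euclidean dual `E^⊥` has Hamming weight at
least `4`. -/
theorem statement8 {q : ℕ} (hq : ∃ p e : ℕ, p.Prime ∧ 0 < e ∧ q = p ^ e)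
    (F K : Type*) [Field F] [Fintype F] [DecidableEq F]
    [Field K] [Fintype K] [Algebra F K]
    (hF : Fintype.card F = q) (hK : Fintype.card K = q ^ 2)
    (S : Finset K) (hS : ∀ x ∈ S, ∀ y ∈ S, x ≠ y → y ≠ x ^ q)
    (τ ν : K → F)
    (hτ : ∀ x : K, algebraMap F K (τ x) = x ^ q + x)
    (hν : ∀ x : K, algebraMap F K (ν x) = x ^ (q + 1))
    (E : Submodule F (S → F))
    (hE : E = Submodule.span F
      ({fun _ => 1, fun x : S => τ (x : K), fun x : S => (τ (x : K)) ^ 2,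
        fun x : S => ν (x : K), fun x : S => (ν (x : K)) ^ 2} : Set (S → F))) :
    ∀ u ∈ dualCode E, u ≠ 0 → 4 ≤ hammingNorm u :=
  statement8_general F K S hS τ ν hτ hν E hE
end

section
/- Let q ≥ 7 be a prime power, F the finite field with q elements, and K a field extension of F with q² elements. Then there exist four elements β₁, β₂, β₃, β₄ ∈ K∖F, pairwise distinct and pairwise non-conjugate (β_j ≠ β_i^q for all i ≠ j), such that β₁^{q+1} = β₂^{q+1} = β₃^{q+1} = β₄^{q+1} is a nonzero element of F. Consequently, the four vectors (1, β_i^q + β_i, (β_i^q + β_i)², β_i^{q+1}, β_i^{2(q+1)}) ∈ F⁵, i = 1, 2, 3, 4, are linearly dependent over F. -/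
/-!
Let `g` generate `Kˣ` and put `ζ = g ^ (q - 1)`, an element of order `q + 1`. Every `β = g ζ ^ a`
has norm `β ^ (q + 1) = g ^ (q + 1)` and conjugate `β ^ q = g ζ ^ (1 - a)`. For `a ∈ {0, 2, 3, 4}`
the conditions `β ∉ F`, `βᵢ ≠ βⱼ` and `βⱼ ≠ βᵢ ^ q` therefore say that certain distinct integers of
distance at most `7` are incongruent modulo `q + 1 ≥ 8`. Traces and the common norm `N` lie in `F`,
so the four vectors lie in the `F`-span of `(1, 0, 0, N, N²)`, `(0, 1, 0, 0, 0)` and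
`(0, 0, 1, 0, 0)`, and are dependent.
-/

section TwistedPowers

variable {G : Type*} [CommGroup G] {q : ℕ} {g ζ : G}

theorem mul_zpow_pow_eq_mul_zpow_one_sub (hg : g ^ q = g * ζ) (hζ : ζ ^ (q + 1) = 1) (a : ℤ) :
    (g * ζ ^ a) ^ q = g * ζ ^ (1 - a) := by
  have hζa : ζ ^ (a * q) = ζ ^ (-a) := by
    rw [show a * q = ((q + 1 : ℕ) : ℤ) * a + -a by push_cast; ring, zpow_add, zpow_mul,
      zpow_natCast, hζ, one_zpow, one_mul]
  rw [mul_pow, hg, ← zpow_natCast (ζ ^ a), ← zpow_mul, hζa, sub_eq_add_neg, zpow_add, zpow_one,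
    mul_assoc]

theorem mul_zpow_pow_succ (hg : g ^ q = g * ζ) (hζ : ζ ^ (q + 1) = 1) (a : ℤ) :
    (g * ζ ^ a) ^ (q + 1) = g ^ (q + 1) := by
  rw [pow_succ, mul_zpow_pow_eq_mul_zpow_one_sub hg hζ, mul_mul_mul_comm, ← zpow_add,
    sub_add_cancel, zpow_one, pow_succ, hg]
  exact mul_right_comm _ _ _

end TwistedPowers

theorem exists_pow_eq_mul_orderOf_eq {G : Type*} [Group G] [IsCyclic G] {q : ℕ} (hq : 2 ≤ q)
    (hG : Nat.card G = q ^ 2 - 1) : ∃ g ζ : G, g ^ q = g * ζ ∧ orderOf ζ = q + 1 := by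
  obtain ⟨g, hg⟩ := IsCyclic.exists_ofOrder_eq_natCard (α := G)
  have hfac : q ^ 2 - 1 = (q - 1) * (q + 1) := by
    zify [Nat.one_le_two_pow.trans (Nat.pow_le_pow_left hq 2), show 1 ≤ q by omega]; ring
  refine ⟨g, g ^ (q - 1), ?_, ?_⟩
  · rw [← pow_succ', Nat.sub_add_cancel (by omega)]
  · rw [orderOf_pow_of_dvd (by omega) (by rw [hg, hG, hfac]; exact dvd_mul_right _ _), hg, hG,
      hfac, Nat.mul_div_cancel_left _ (by omega)]

theorem zpow_ne_zpow_of_abs_sub_lt {G : Type*} [Group G] {ζ : G} {m n : ℤ} (hmn : m ≠ n)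
    (hlt : |m - n| < orderOf ζ) : ζ ^ m ≠ ζ ^ n := by
  rw [Ne, zpow_eq_zpow_iff_modEq, Int.modEq_iff_dvd]
  intro h
  have := Int.eq_zero_of_abs_lt_dvd h (by rwa [abs_sub_comm])
  omega

section QuadraticExtension

variable {F K : Type*} [Field F] [Fintype F] [Field K] [Algebra F K]

theorem pow_card_eq_self_of_mem_range {x : K} (hx : x ∈ Set.range (algebraMap F K)) :
    x ^ Fintype.card F = x := by
  obtain ⟨y, rfl⟩ := hx
  rw [← map_pow, FiniteField.pow_card]

variable [Fintype K]

theorem finrank_eq_two_of_card_eq_sq {q : ℕ} (hq : 2 ≤ q) (hF : Fintype.card F = q)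
    (hK : Fintype.card K = q ^ 2) : Module.finrank F K = 2 :=
  Nat.pow_right_injective hq (show q ^ _ = q ^ 2 by rw [← hF, ← Module.card_eq_pow_finrank, hK, hF])

theorem algebraMap_trace_eq_pow_card_add (h : Module.finrank F K = 2) (x : K) :
    algebraMap F K (Algebra.trace F K x) = x ^ Fintype.card F + x := by
  rw [FiniteField.algebraMap_trace_eq_sum_pow, h, Fintype.card_eq_nat_card]
  simp [Finset.sum_range_succ, add_comm]

theorem algebraMap_norm_eq_pow_card_succ (h : Module.finrank F K = 2) (x : K) :
    algebraMap F K (Algebra.norm F x) = x ^ (Fintype.card F + 1) := by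
  rw [FiniteField.algebraMap_norm_eq_pow_sum, h, Fintype.card_eq_nat_card]
  simp [Finset.sum_range_succ, add_comm]

end QuadraticExtension

theorem not_linearIndependent_moment_vectors {F K ι : Type*} [Field F] [Semiring K] [Algebra F K]
    [Fintype ι] (hι : 3 < Fintype.card ι) (t : ι → F) (c : K) :
    ¬ LinearIndependent F
      (fun i => (![1, algebraMap F K (t i), algebraMap F K (t i) ^ 2, c, c ^ 2] : Fin 5 → K)) := by
  intro h
  let L := Fintype.linearCombination F
    (![![1, 0, 0, c, c ^ 2], ![0, 1, 0, 0, 0], ![0, 0, 1, 0, 0]] : Fin 3 → Fin 5 → K)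
  have hfac : (fun i => (![1, algebraMap F K (t i), algebraMap F K (t i) ^ 2, c, c ^ 2] : Fin 5 → K))
      = L ∘ fun i => ![1, t i, t i ^ 2] := by
    funext i k
    fin_cases k <;> simp [L, Fintype.linearCombination_apply, Fin.sum_univ_three, Algebra.smul_def]
  rw [hfac] at h
  have := (h.of_comp L).fintype_card_le_finrank
  simp only [Module.finrank_fin_fun] at this
  omega

theorem statement9_general {q : ℕ} (hq7 : 7 ≤ q)
    (F K : Type*) [Field F] [Fintype F] [Field K] [Fintype K] [Algebra F K]
    (hF : Fintype.card F = q) (hK : Fintype.card K = q ^ 2) :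
    ∃ β : Fin 4 → K,
      (∀ i, β i ∉ Set.range (algebraMap F K)) ∧
      (∀ i j, i ≠ j → β i ≠ β j) ∧
      (∀ i j, i ≠ j → β j ≠ β i ^ q) ∧
      (∃ γ : F, γ ≠ 0 ∧ ∀ i, β i ^ (q + 1) = algebraMap F K γ) ∧
      ¬ LinearIndependent F
        (fun i => (![1, β i ^ q + β i, (β i ^ q + β i) ^ 2, β i ^ (q + 1),
          β i ^ (2 * (q + 1))] : Fin 5 → K)) := by
  have hrank : Module.finrank F K = 2 := finrank_eq_two_of_card_eq_sq (by omega) hF hK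
  obtain ⟨g, ζ, hg, hζ⟩ := exists_pow_eq_mul_orderOf_eq (G := Kˣ) (q := q) (by omega)
    (by rw [Nat.card_units, Nat.card_eq_fintype_card, hK])
  have hζ1 : ζ ^ (q + 1) = 1 := hζ ▸ pow_orderOf_eq_one ζ
  have hsep (m n : ℤ) (hmn : m ≠ n) (hlt : |m - n| ≤ 7) :
      ((g * ζ ^ m : Kˣ) : K) ≠ ((g * ζ ^ n : Kˣ) : K) := fun h =>
    zpow_ne_zpow_of_abs_sub_lt hmn (by rw [hζ]; push_cast; omega)
      (mul_left_cancel (Units.val_injective h))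
  obtain ⟨a, ha_fixed, ha_ne, ha_conj⟩ : ∃ a : Fin 4 → ℤ,
      (∀ i, 1 - a i ≠ a i ∧ |1 - a i - a i| ≤ 7) ∧
      (∀ i j, i ≠ j → a i ≠ a j ∧ |a i - a j| ≤ 7) ∧
      (∀ i j, i ≠ j → a j ≠ 1 - a i ∧ |a j - (1 - a i)| ≤ 7) :=
    ⟨![0, 2, 3, 4], by decide⟩
  let β : Fin 4 → K := fun i => ((g * ζ ^ a i : Kˣ) : K)
  have hconj (i : Fin 4) : β i ^ q = ((g * ζ ^ (1 - a i) : Kˣ) : K) := by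
    rw [← Units.val_pow_eq_pow_val, mul_zpow_pow_eq_mul_zpow_one_sub hg hζ1]
  have hnorm (i : Fin 4) : β i ^ (q + 1) = β 0 ^ (q + 1) := by
    simp only [β, ← Units.val_pow_eq_pow_val, mul_zpow_pow_succ hg hζ1]
  have hγ : algebraMap F K (Algebra.norm F (β 0)) = β 0 ^ (q + 1) := by
    rw [algebraMap_norm_eq_pow_card_succ hrank, hF]
  refine ⟨β, fun i hi => ?_, fun i j hij => hsep _ _ (ha_ne i j hij).1 (ha_ne i j hij).2,
    fun i j hij => hconj i ▸ hsep _ _ (ha_conj i j hij).1 (ha_conj i j hij).2,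
    ⟨Algebra.norm F (β 0), fun h0 => ?_, fun i => by rw [hnorm, hγ]⟩, ?_⟩
  · have h := pow_card_eq_self_of_mem_range hi
    rw [hF, hconj] at h
    exact hsep _ _ (ha_fixed i).1 (ha_fixed i).2 h
  · rw [h0, map_zero, eq_comm] at hγ
    exact pow_ne_zero _ (Units.ne_zero _) hγ
  · convert not_linearIndependent_moment_vectors (by simp) (fun i => Algebra.trace F K (β i))
      (β 0 ^ (q + 1)) using 3 with i
    simp only [algebraMap_trace_eq_pow_card_add hrank, hF, pow_mul', hnorm]

/-- Let `q ≥ 7` be a prime power, `F = F_q`, and `K = F_{q²}`.  Then there exist four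
elements `β₁, β₂, β₃, β₄ ∈ K∖F`, pairwise distinct and pairwise non-conjugate, whose
norms `β_i^{q+1}` all coincide and equal a nonzero element of `F`; consequently the
four vectors `(1, β_i^q + β_i, (β_i^q + β_i)², β_i^{q+1}, β_i^{2(q+1)})` (whose
entries lie in `F`) are linearly dependent over `F`. -/
theorem statement9 {q : ℕ} (hq : ∃ p e : ℕ, p.Prime ∧ 0 < e ∧ q = p ^ e) (hq7 : 7 ≤ q)
    (F K : Type*) [Field F] [Fintype F] [Field K] [Fintype K] [Algebra F K]
    (hF : Fintype.card F = q) (hK : Fintype.card K = q ^ 2) :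
    ∃ β : Fin 4 → K,
      (∀ i, β i ∉ Set.range (algebraMap F K)) ∧
      (∀ i j, i ≠ j → β i ≠ β j) ∧
      (∀ i j, i ≠ j → β j ≠ β i ^ q) ∧
      (∃ γ : F, γ ≠ 0 ∧ ∀ i, β i ^ (q + 1) = algebraMap F K γ) ∧
      ¬ LinearIndependent F
        (fun i => (![1, β i ^ q + β i, (β i ^ q + β i) ^ 2, β i ^ (q + 1),
          β i ^ (2 * (q + 1))] : Fin 5 → K)) :=
  statement9_general hq7 F K hF hK
end

section
/- Let K be a field and q a positive integer. Let a, b, c, d ∈ K be pairwise distinct and pairwise non-conjugate (i.e., for every two distinct elements x, y among a, b, c, d one has y ≠ x^q). Then the four vectors w(y) = (1, y^{q+1}, y^{2(q+1)}, y^{3(q+1)}, y^q + y, (y^q + y)², (y^q + y)³, y^{2q+1} + y^{q+2}) ∈ K⁸, for y = a, b, c, d, are linearly independent over K. -/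
def traceNormVec8 (K : Type*) [Field K] (q : ℕ) (y : K) : Fin 8 → K :=
  ![1, y ^ (q + 1), y ^ (2 * (q + 1)), y ^ (3 * (q + 1)),
    y ^ q + y, (y ^ q + y) ^ 2, (y ^ q + y) ^ 3, y ^ (2 * q + 1) + y ^ (q + 2)]

/-!
With `t = y^q + y` and `n = y^{q+1}`, the vector attached to `y` lists the values at `(t, n)` of
the monomials `1, n, n², n³, t, t², t³, nt`, and distinct non-conjugate `y` give distinct points
`(t, n)`, because `y` and `y^q` are the two roots of `X² - tX + n`. Any four distinct points of
the plane are separated by the span of these monomials: for each point some combination vanishes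
at the other three points but not at it. If no other point shares its `t`-coordinate (resp. its
`n`-coordinate), a cubic in `t` (resp. in `n`) does it; otherwise a combination of products of at
most two linear factors does. Applying these functions to a linear relation kills each of its
coefficients.
-/

open Polynomial

theorem Finset.exists_mem_forall_mem_eq_or_eq_or_eq {α : Type*} {S : Finset α} (hS : S.card ≤ 3)
    {a b : α} (ha : a ∈ S) (hb : b ∈ S) (hab : a ≠ b) :
    ∃ c ∈ S, ∀ x ∈ S, x = a ∨ x = b ∨ x = c := by
  classical
  set T := (S.erase a).erase b with hT
  have hTcard : T.card ≤ 1 := by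
    rw [hT, Finset.card_erase_of_mem (Finset.mem_erase.2 ⟨hab.symm, hb⟩),
      Finset.card_erase_of_mem ha]
    omega
  have hmem : ∀ x ∈ S, x ≠ a → x ≠ b → x ∈ T := fun x hx hxa hxb => by simp [*]
  rcases T.eq_empty_or_nonempty with hT0 | ⟨c, hc⟩
  · refine ⟨a, ha, fun x hx => ?_⟩
    by_contra! h
    simpa [hT0] using hmem x hx h.1 h.2.1
  · refine ⟨c, (Finset.mem_erase.1 (Finset.mem_erase.1 hc).2).2, fun x hx => ?_⟩
    by_contra! h
    exact h.2.2 (Finset.card_le_one.1 hTcard x (hmem x hx h.1 h.2.1) c hc)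

section MonomialSpan

variable {R : Type*} [CommRing R]

def monomialVec (x : R × R) : Fin 8 → R :=
  ![1, x.2, x.2 ^ 2, x.2 ^ 3, x.1, x.1 ^ 2, x.1 ^ 3, x.2 * x.1]

variable (R) in
def monomialSpan : Submodule R (R × R → R) :=
  Submodule.span R (Set.range fun i x => monomialVec x i)

theorem monomialVec_apply_mem_monomialSpan (i : Fin 8) :
    (fun x => monomialVec x i) ∈ monomialSpan R :=
  Submodule.subset_span ⟨i, rfl⟩

theorem eval_fst_mem_monomialSpan {p : R[X]} (hp : p.natDegree ≤ 3) :
    (fun x : R × R => p.eval x.1) ∈ monomialSpan R := by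
  have h : (fun x : R × R => p.eval x.1) = p.coeff 0 • (fun x => monomialVec x 0) +
      p.coeff 1 • (fun x => monomialVec x 4) + p.coeff 2 • (fun x => monomialVec x 5) +
      p.coeff 3 • (fun x => monomialVec x 6) := by
    funext x
    simp [monomialVec, eval_eq_sum_range' (Nat.lt_succ_of_le hp), Finset.sum_range_succ]
  rw [h]
  apply_rules [add_mem, Submodule.smul_mem, monomialVec_apply_mem_monomialSpan]

theorem eval_snd_mem_monomialSpan {p : R[X]} (hp : p.natDegree ≤ 3) :
    (fun x : R × R => p.eval x.2) ∈ monomialSpan R := by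
  have h : (fun x : R × R => p.eval x.2) = p.coeff 0 • (fun x => monomialVec x 0) +
      p.coeff 1 • (fun x => monomialVec x 1) + p.coeff 2 • (fun x => monomialVec x 2) +
      p.coeff 3 • (fun x => monomialVec x 3) := by
    funext x
    simp [monomialVec, eval_eq_sum_range' (Nat.lt_succ_of_le hp), Finset.sum_range_succ]
  rw [h]
  apply_rules [add_mem, Submodule.smul_mem, monomialVec_apply_mem_monomialSpan]

theorem sub_mul_sub_mem_monomialSpan (a b : R) :
    (fun x : R × R => (x.1 - a) * (x.2 - b)) ∈ monomialSpan R := by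
  have h : (fun x : R × R => (x.1 - a) * (x.2 - b)) = (fun x => monomialVec x 7) -
      b • (fun x => monomialVec x 4) - a • (fun x => monomialVec x 1) +
      (a * b) • (fun x => monomialVec x 0) := by
    funext x
    simp [monomialVec]
    ring
  rw [h]
  apply_rules [add_mem, sub_mem, Submodule.smul_mem, monomialVec_apply_mem_monomialSpan]

theorem sum_mul_eq_zero_of_mem_monomialSpan {ι : Type*} [Fintype ι] {p : ι → R × R}
    {g : ι → R} (hg : ∑ i, g i • monomialVec (p i) = 0) {f : R × R → R}
    (hf : f ∈ monomialSpan R) : ∑ i, g i * f (p i) = 0 := by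
  induction hf using Submodule.span_induction with
  | mem f hf =>
    obtain ⟨k, rfl⟩ := hf
    simpa using congrFun hg k
  | zero => simp
  | add f f' _ _ h h' => simp [mul_add, Finset.sum_add_distrib, h, h']
  | smul c f _ h => simp [mul_left_comm _ c, ← Finset.mul_sum, h]

variable [IsDomain R]

theorem exists_separating_of_fst_ne {P : R × R} {S : Finset (R × R)} (hS : S.card ≤ 3)
    (h : ∀ Q ∈ S, Q.1 ≠ P.1) :
    ∃ f ∈ monomialSpan R, f P ≠ 0 ∧ ∀ Q ∈ S, f Q = 0 := by
  refine ⟨fun x => (∏ Q ∈ S, (X - C Q.1)).eval x.1,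
    eval_fst_mem_monomialSpan (by simpa using hS), ?_, fun Q hQ => ?_⟩
  · simpa [eval_prod] using Finset.prod_ne_zero_iff.mpr fun Q hQ => sub_ne_zero.mpr (h Q hQ).symm
  · simpa [eval_prod] using Finset.prod_eq_zero hQ (sub_self Q.1)

theorem exists_separating_of_snd_ne {P : R × R} {S : Finset (R × R)} (hS : S.card ≤ 3)
    (h : ∀ Q ∈ S, Q.2 ≠ P.2) :
    ∃ f ∈ monomialSpan R, f P ≠ 0 ∧ ∀ Q ∈ S, f Q = 0 := by
  refine ⟨fun x => (∏ Q ∈ S, (X - C Q.2)).eval x.2,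
    eval_snd_mem_monomialSpan (by simpa using hS), ?_, fun Q hQ => ?_⟩
  · simpa [eval_prod] using Finset.prod_ne_zero_iff.mpr fun Q hQ => sub_ne_zero.mpr (h Q hQ).symm
  · simpa [eval_prod] using Finset.prod_eq_zero hQ (sub_self Q.2)

theorem exists_separating_of_fst_eq_of_snd_eq {t n t₃ n₂ t₄ n₄ : R} (hn₂ : n ≠ n₂)
    (ht₃ : t ≠ t₃) (h₄ : (t, n) ≠ (t₄, n₄)) :
    ∃ f ∈ monomialSpan R, f (t, n) ≠ 0 ∧ f (t, n₂) = 0 ∧ f (t₃, n) = 0 ∧ f (t₄, n₄) = 0 := by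
  rcases eq_or_ne t t₄ with rfl | ht₄
  · have hn₄ : n ≠ n₄ := fun h => h₄ (by rw [h])
    refine ⟨(t - t₃) • (fun x => ((X - C n₂) * (X - C n₄)).eval x.2) +
        ((n - n₂) * (n - n₄)) • (fun x => (X - C t).eval x.1),
      add_mem (Submodule.smul_mem _ _ (eval_snd_mem_monomialSpan (by compute_degree!)))
        (Submodule.smul_mem _ _ (eval_fst_mem_monomialSpan (by compute_degree!))), ?_, ?_⟩
    · simp [sub_eq_zero, *]
    · simp
      ring
  rcases eq_or_ne n n₄ with rfl | hn₄
  · refine ⟨(n - n₂) • (fun x => ((X - C t₃) * (X - C t₄)).eval x.1) +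
        ((t - t₃) * (t - t₄)) • (fun x => (X - C n).eval x.2),
      add_mem (Submodule.smul_mem _ _ (eval_fst_mem_monomialSpan (by compute_degree!)))
        (Submodule.smul_mem _ _ (eval_snd_mem_monomialSpan (by compute_degree!))), ?_, ?_⟩
    · simp [sub_eq_zero, *]
    · simp
      ring
  -- both products vanish at `(t, n₂)` and `(t₃, n)`; the weights cancel them at `(t₄, n₄)`
  refine ⟨((t - t₄) * (n - n₄)) • (fun x => (x.1 - t₃) * (x.2 - n₂)) -
      ((t₄ - t₃) * (n₄ - n₂)) • (fun x => (x.1 - t) * (x.2 - n)),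
    sub_mem (Submodule.smul_mem _ _ (sub_mul_sub_mem_monomialSpan _ _))
      (Submodule.smul_mem _ _ (sub_mul_sub_mem_monomialSpan _ _)), ?_, ?_⟩
  · simp [sub_eq_zero, *]
  · simp
    ring

theorem exists_separating {P : R × R} {S : Finset (R × R)} (hP : P ∉ S) (hS : S.card ≤ 3) :
    ∃ f ∈ monomialSpan R, f P ≠ 0 ∧ ∀ Q ∈ S, f Q = 0 := by
  by_cases h₁ : ∀ Q ∈ S, Q.1 ≠ P.1
  · exact exists_separating_of_fst_ne hS h₁
  by_cases h₂ : ∀ Q ∈ S, Q.2 ≠ P.2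
  · exact exists_separating_of_snd_ne hS h₂
  push Not at h₁ h₂
  obtain ⟨t, n⟩ := P
  obtain ⟨⟨t₂, n₂⟩, hQ₂, ht₂ : t₂ = t⟩ := h₁
  obtain ⟨⟨t₃, n₃⟩, hQ₃, hn₃ : n₃ = n⟩ := h₂
  subst t₂ n₃
  have hn₂ : n ≠ n₂ := by rintro rfl; exact hP hQ₂
  have ht₃ : t ≠ t₃ := by rintro rfl; exact hP hQ₃
  obtain ⟨⟨t₄, n₄⟩, hQ₄, hS₄⟩ := Finset.exists_mem_forall_mem_eq_or_eq_or_eq hS hQ₂ hQ₃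
    (by simp [ht₃])
  obtain ⟨f, hf, hfP, hf₂, hf₃, hf₄⟩ :=
    exists_separating_of_fst_eq_of_snd_eq hn₂ ht₃ (ne_of_mem_of_not_mem hQ₄ hP).symm
  refine ⟨f, hf, hfP, fun Q hQ => ?_⟩
  rcases hS₄ Q hQ with rfl | rfl | rfl <;> assumption

theorem linearIndependent_monomialVec {ι : Type*} [Fintype ι] (hι : Fintype.card ι ≤ 4)
    {p : ι → R × R} (hp : Function.Injective p) :
    LinearIndependent R fun i => monomialVec (p i) := by
  classical
  rw [Fintype.linearIndependent_iff]
  intro g hg i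
  have hcard : ((Finset.univ.erase i).image p).card ≤ 3 :=
    Finset.card_image_le.trans (by simp [Finset.card_erase_of_mem]; omega)
  obtain ⟨f, hf, hfi, hfj⟩ := exists_separating (P := p i) (by simp [hp.eq_iff]) hcard
  have hsum := sum_mul_eq_zero_of_mem_monomialSpan hg hf
  rw [Finset.sum_eq_single i
    (fun j _ hj => by rw [hfj _ (Finset.mem_image_of_mem p (by simpa using hj)), mul_zero])
    (by simp)] at hsum
  exact (mul_eq_zero.1 hsum).resolve_right hfi

end MonomialSpan

theorem eq_or_eq_pow_of_add_eq_of_pow_succ_eq {R : Type*} [CommRing R] [IsDomain R] {y z : R}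
    {q : ℕ} (ht : z ^ q + z = y ^ q + y) (hn : z ^ (q + 1) = y ^ (q + 1)) :
    z = y ∨ z = y ^ q := by
  have h : (z - y) * (z - y ^ q) = 0 := by linear_combination z * ht - hn
  simpa [sub_eq_zero] using h

theorem traceNormVec8_eq_monomialVec (K : Type*) [Field K] (q : ℕ) (y : K) :
    traceNormVec8 K q y = monomialVec (y ^ q + y, y ^ (q + 1)) := by
  funext i
  fin_cases i <;> simp [traceNormVec8, monomialVec] <;> ring

theorem statement10_general (K : Type*) [Field K] (q : ℕ) (β : Fin 4 → K)
    (hdist : ∀ i j, i ≠ j → β i ≠ β j)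
    (hconj : ∀ i j, i ≠ j → β j ≠ β i ^ q) :
    LinearIndependent K (fun i => traceNormVec8 K q (β i)) := by
  simp only [traceNormVec8_eq_monomialVec]
  refine linearIndependent_monomialVec (by simp) fun i j hij => ?_
  by_contra hne
  simp only [Prod.mk.injEq] at hij
  rcases eq_or_eq_pow_of_add_eq_of_pow_succ_eq hij.1.symm hij.2.symm with h | h
  · exact hdist i j hne h.symm
  · exact hconj i j hne h

/-- Let `K` be a field and `q` a positive integer.  If `a, b, c, d ∈ K` are pairwise
distinct and pairwise non-conjugate, then the four vectors
`(1, y^{q+1}, y^{2(q+1)}, y^{3(q+1)}, y^q + y, (y^q + y)², (y^q + y)³, y^{2q+1} + y^{q+2})`,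
for `y = a, b, c, d`, are linearly independent over `K`. -/
theorem statement10 (K : Type*) [Field K] (q : ℕ) (hq : 0 < q) (β : Fin 4 → K)
    (hdist : ∀ i j, i ≠ j → β i ≠ β j)
    (hconj : ∀ i j, i ≠ j → β j ≠ β i ^ q) :
    LinearIndependent K (fun i => traceNormVec8 K q (β i)) :=
  statement10_general K q β hdist hconj
end

section
/- Let q ≥ 5 be a prime power, F the finite field with q elements, and K a field extension of F with q² elements. Let S ⊆ K be a finite subset that contains no conjugate pair. Let 𝓕 ⊆ F^S be the F-span of the eight vectors obtained by evaluating the functions 1, x^{q+1}, x^{2(q+1)}, x^{3(q+1)}, x^q + x, x^{2q} + x², x^{3q} + x³, and x^{2q+1} + x^{q+2} at the points of S (all of these values lie in F). Then every nonzero vector of the Euclidean dual 𝓕^⊥ ⊆ F^S has Hamming weight at least 5. -/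
open Finset Polynomial
open scoped Pointwise

def conicCubeMonomials (F : Type*) [Field F] : Set (F × F → F) :=
  {1, Prod.fst, Prod.snd, Prod.fst ^ 2, Prod.fst * Prod.snd, Prod.snd ^ 2, Prod.fst ^ 3,
    Prod.snd ^ 3}

def conicCubeSpace (F : Type*) [Field F] : Submodule F (F × F → F) :=
  Submodule.span F (conicCubeMonomials F)

def affineForms (F : Type*) [Field F] : Submodule F (F × F → F) :=
  Submodule.span F {1, Prod.fst, Prod.snd}

def Separates {α F : Type*} [Field F] (f : α → F) (R : Finset α) (z : α) : Prop :=
  (∀ P ∈ R, f P = 0) ∧ f z ≠ 0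

def lineThrough {F : Type*} [Field F] (a b : F × F) (P : F × F) : F :=
  (b.1 - a.1) * (P.2 - a.2) - (b.2 - a.2) * (P.1 - a.1)

section

variable {F : Type*} [Field F]

lemma Separates.mul {α : Type*} [DecidableEq α] {f g : α → F} {R₁ R₂ : Finset α} {z : α}
    (hf : Separates f R₁ z) (hg : Separates g R₂ z) : Separates (f * g) (R₁ ∪ R₂) z := by
  refine ⟨fun P hP => ?_, mul_ne_zero hf.2 hg.2⟩
  rcases mem_union.mp hP with hP | hP
  · simp [hf.1 P hP]
  · simp [hg.1 P hP]

lemma affine_mem_affineForms (c₀ c₁ c₂ : F) :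
    (fun P : F × F => c₀ + c₁ * P.1 + c₂ * P.2) ∈ affineForms F := by
  have h : (fun P : F × F => c₀ + c₁ * P.1 + c₂ * P.2) =
      c₀ • (1 : F × F → F) + c₁ • Prod.fst + c₂ • Prod.snd := by
    ext P; simp
  rw [h]
  refine add_mem (add_mem ?_ ?_) ?_ <;> refine Submodule.smul_mem _ _ (Submodule.subset_span ?_)
    <;> simp

lemma mul_mem_conicCubeSpace {ℓ₁ ℓ₂ : F × F → F} (h₁ : ℓ₁ ∈ affineForms F)
    (h₂ : ℓ₂ ∈ affineForms F) : ℓ₁ * ℓ₂ ∈ conicCubeSpace F := by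
  let A : Set (F × F → F) := {1, Prod.fst, Prod.snd}
  have hsub : A * A ⊆ conicCubeMonomials F := by
    rintro _ ⟨f, hf | hf | hf, g, hg | hg | hg, rfl⟩ <;> subst hf <;> subst hg <;>
      simp [conicCubeMonomials, sq, mul_comm]
  have := Submodule.mul_mem_mul h₁ h₂
  rw [affineForms, Submodule.span_mul_span] at this
  exact Submodule.span_mono hsub this

lemma pow_mem_conicCubeMonomials {π : F × F → F} (hπ : π = Prod.fst ∨ π = Prod.snd) {i : ℕ}
    (hi : i < 4) : π ^ i ∈ conicCubeMonomials F := by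
  interval_cases i <;> rcases hπ with rfl | rfl <;> simp [conicCubeMonomials]

lemma lineThrough_mem_affineForms (a b : F × F) : lineThrough a b ∈ affineForms F := by
  convert affine_mem_affineForms ((b.2 - a.2) * a.1 - (b.1 - a.1) * a.2) (a.2 - b.2) (b.1 - a.1)
    using 1
  ext P; simp only [lineThrough]; ring

lemma separates_lineThrough [DecidableEq F] {a b z : F × F} (hz : lineThrough a b z ≠ 0) :
    Separates (lineThrough a b) {a, b} z := by
  refine ⟨fun P hP => ?_, hz⟩
  rcases mem_insert.mp hP with rfl | hP
  · simp [lineThrough]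
  · rw [mem_singleton.mp hP]; simp only [lineThrough]; ring

lemma exists_affineForm_separates [DecidableEq F] {a z : F × F} (h : a ≠ z) :
    ∃ ℓ ∈ affineForms F, Separates ℓ {a} z := by
  by_cases h₁ : a.1 = z.1
  · refine ⟨_, affine_mem_affineForms (-a.2) 0 1, by simp, ?_⟩
    have h₂ : a.2 ≠ z.2 := fun h₂ => h (Prod.ext h₁ h₂)
    simpa [neg_add_eq_sub, sub_eq_zero, eq_comm] using h₂
  · refine ⟨_, affine_mem_affineForms (-a.1) 1 0, by simp, ?_⟩
    simpa [neg_add_eq_sub, sub_eq_zero, eq_comm] using h₁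

lemma lineThrough_eq_zero_of_mem_lines {a b c z : F × F} (hz : z ≠ a)
    (hb : lineThrough a b z = 0) (hc : lineThrough a c z = 0) : lineThrough a b c = 0 := by
  simp only [lineThrough] at *
  by_contra h
  refine hz (Prod.ext ?_ ?_)
  · refine sub_eq_zero.mp ((mul_eq_zero.mp ?_).resolve_left h)
    linear_combination (c.1 - a.1) * hb - (b.1 - a.1) * hc
  · refine sub_eq_zero.mp ((mul_eq_zero.mp ?_).resolve_left h)
    linear_combination (c.2 - a.2) * hb - (b.2 - a.2) * hc

lemma coord_ne_of_lineThrough_eq_zero {a b z : F × F} (hab : a ≠ b) {R : Finset (F × F)}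
    (hz : z ∉ R) (hzl : lineThrough a b z = 0) (hR : ∀ P ∈ R, lineThrough a b P = 0) :
    (∀ P ∈ R, P.1 ≠ z.1) ∨ (∀ P ∈ R, P.2 ≠ z.2) := by
  have hne : ∀ P ∈ R, P ≠ z := fun P hP h => hz (h ▸ hP)
  simp only [lineThrough] at hzl hR
  by_cases h₁ : b.1 = a.1
  · have h₂ : b.2 - a.2 ≠ 0 := sub_ne_zero.mpr fun h₂ => hab (Prod.ext h₁ h₂).symm
    have hfst : ∀ P : F × F, (b.1 - a.1) * (P.2 - a.2) - (b.2 - a.2) * (P.1 - a.1) = 0 →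
        P.1 = a.1 := fun P hP =>
      sub_eq_zero.mp ((mul_eq_zero.mp (by rw [h₁] at hP; linear_combination -hP)).resolve_left h₂)
    exact Or.inr fun P hP h => hne P hP (Prod.ext ((hfst P (hR P hP)).trans (hfst z hzl).symm) h)
  · refine Or.inl fun P hP h => hne P hP (Prod.ext h (sub_eq_zero.mp ?_))
    refine (mul_eq_zero.mp ?_).resolve_left (sub_ne_zero.mpr h₁)
    linear_combination hR P hP - hzl + (b.2 - a.2) * h

lemma exists_separates_of_coord_ne {π : F × F → F} (hπ : π = Prod.fst ∨ π = Prod.snd)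
    {R : Finset (F × F)} (hR : #R ≤ 3) {z : F × F} (hRz : ∀ P ∈ R, π P ≠ π z) :
    ∃ f ∈ conicCubeSpace F, Separates f R z := by
  set g : F[X] := ∏ P ∈ R, (X - C (π P))
  have hg : g.natDegree < 4 := by
    rw [natDegree_prod_of_monic _ _ fun P _ => monic_X_sub_C _]
    simp only [natDegree_X_sub_C, sum_const, smul_eq_mul, mul_one]
    omega
  refine ⟨aeval π g, ?_, fun P hP => ?_, ?_⟩
  · rw [aeval_eq_sum_range' hg]
    exact Submodule.sum_mem _ fun i hi => Submodule.smul_mem _ _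
      (Submodule.subset_span (pow_mem_conicCubeMonomials hπ (mem_range.mp hi)))
  · simp [g, prod_eq_zero hP]
  · simp only [g, aeval_pi_apply₂, coe_aeval_eq_eval, eval_prod, eval_sub, eval_X, eval_C]
    exact prod_ne_zero_iff.mpr fun P hP => sub_ne_zero.mpr (hRz P hP).symm

lemma exists_separates_of_affineForms [DecidableEq F] {ℓ₁ ℓ₂ : F × F → F}
    {R₁ R₂ : Finset (F × F)} {z : F × F} (h₁ : ℓ₁ ∈ affineForms F) (h₂ : ℓ₂ ∈ affineForms F)
    (hs₁ : Separates ℓ₁ R₁ z) (hs₂ : Separates ℓ₂ R₂ z) :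
    ∃ f ∈ conicCubeSpace F, Separates f (R₁ ∪ R₂) z :=
  ⟨_, mul_mem_conicCubeSpace h₁ h₂, hs₁.mul hs₂⟩

lemma one_mem_affineForms : (1 : F × F → F) ∈ affineForms F :=
  Submodule.subset_span (by simp)

lemma separates_one_empty (z : F × F) : Separates (1 : F × F → F) ∅ z := by
  simp [Separates]

theorem exists_mem_conicCubeSpace_separates [DecidableEq F] {R : Finset (F × F)} (hR : #R ≤ 3)
    {z : F × F} (hz : z ∉ R) : ∃ f ∈ conicCubeSpace F, Separates f R z := by
  interval_cases h : #R
  · simpa [card_eq_zero.mp h] using exists_separates_of_affineForms one_mem_affineForms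
      one_mem_affineForms (separates_one_empty z) (separates_one_empty z)
  · obtain ⟨a, rfl⟩ := card_eq_one.mp h
    obtain ⟨ℓ, hℓ, hsℓ⟩ := exists_affineForm_separates (Ne.symm (notMem_singleton.mp hz))
    simpa using exists_separates_of_affineForms hℓ one_mem_affineForms hsℓ (separates_one_empty z)
  · obtain ⟨a, b, -, rfl⟩ := card_eq_two.mp h
    simp only [mem_insert, mem_singleton, not_or] at hz
    obtain ⟨ℓa, hℓa, hsa⟩ := exists_affineForm_separates (Ne.symm hz.1)
    obtain ⟨ℓb, hℓb, hsb⟩ := exists_affineForm_separates (Ne.symm hz.2)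
    simpa using exists_separates_of_affineForms hℓa hℓb hsa hsb
  · obtain ⟨a, b, c, hab, -, -, rfl⟩ := card_eq_three.mp h
    simp only [mem_insert, mem_singleton, not_or] at hz
    obtain ⟨hza, hzb, hzc⟩ := hz
    by_cases hlab : lineThrough a b z = 0
    · by_cases hlac : lineThrough a c z = 0
      · have hlabc := lineThrough_eq_zero_of_mem_lines hza hlab hlac
        have hline : ∀ P ∈ ({a, b, c} : Finset (F × F)), lineThrough a b P = 0 := by
          simp only [mem_insert, mem_singleton]
          rintro P (rfl | rfl | rfl)
          · simp [lineThrough]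
          · simp only [lineThrough]; ring
          · exact hlabc
        rcases coord_ne_of_lineThrough_eq_zero hab (by simp [hza, hzb, hzc]) hlab hline
          with hcoord | hcoord
        · exact exists_separates_of_coord_ne (Or.inl rfl) h.le hcoord
        · exact exists_separates_of_coord_ne (Or.inr rfl) h.le hcoord
      · obtain ⟨ℓ, hℓ, hsℓ⟩ := exists_affineForm_separates (Ne.symm hzb)
        have := exists_separates_of_affineForms (lineThrough_mem_affineForms a c) hℓ
          (separates_lineThrough hlac) hsℓ
        rwa [show ({a, c} ∪ {b} : Finset (F × F)) = {a, b, c} by ext; simp; tauto] at this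
    · obtain ⟨ℓ, hℓ, hsℓ⟩ := exists_affineForm_separates (Ne.symm hzc)
      have := exists_separates_of_affineForms (lineThrough_mem_affineForms a b) hℓ
        (separates_lineThrough hlab) hsℓ
      rwa [show ({a, b} ∪ {c} : Finset (F × F)) = {a, b, c} by ext; simp] at this

lemma eq_zero_of_mem_dualCode {ι : Type*} [Fintype ι] {C : Submodule F (ι → F)} {u g : ι → F}
    (hu : u ∈ dualCode C) (hg : g ∈ C) {z : ι} (hgu : ∀ i ≠ z, u i ≠ 0 → g i = 0)
    (hgz : g z ≠ 0) : u z = 0 := by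
  have horth : ∑ i, u i * g i = 0 := hu g hg
  rw [Fintype.sum_eq_single z fun i hi => ?_] at horth
  · exact (mul_eq_zero.mp horth).resolve_right hgz
  · by_cases hui : u i = 0
    · rw [hui, zero_mul]
    · rw [hgu i hi hui, mul_zero]

lemma comp_mem_of_conicCubeMonomials {ι : Type*} {φ : ι → F × F} {C : Submodule F (ι → F)}
    (h : ∀ m ∈ conicCubeMonomials F, m ∘ φ ∈ C) {f : F × F → F} (hf : f ∈ conicCubeSpace F) :
    f ∘ φ ∈ C :=
  (Submodule.span_le (p := C.comap (LinearMap.funLeft F F φ))).mpr h hf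

lemma eq_or_eq_of_add_eq_of_mul_eq {x x' y y' : F} (hs : x' + x = y' + y)
    (hp : x' * x = y' * y) : y = x ∨ y = x' := by
  have h : (y - x) * (y - x') = 0 := by linear_combination (-y) * hs + hp
  rcases mul_eq_zero.mp h with h | h
  · exact Or.inl (sub_eq_zero.mp h)
  · exact Or.inr (sub_eq_zero.mp h)

section TraceNorm

variable {K : Type*} [Field K] [Algebra F K] {q : ℕ}

lemma injOn_trace_norm {S : Finset K} (hS : ∀ x ∈ S, ∀ y ∈ S, x ≠ y → y ≠ x ^ q)
    {ν τ : K → F} (hν : ∀ x : K, algebraMap F K (ν x) = x ^ (q + 1))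
    (hτ : ∀ x : K, algebraMap F K (τ x) = x ^ q + x) :
    Set.InjOn (fun x => (τ x, ν x)) S := by
  intro x hx y hy hxy
  simp only [Prod.mk.injEq] at hxy
  have hs : x ^ q + x = y ^ q + y := by rw [← hτ, ← hτ, hxy.1]
  have hp : x ^ q * x = y ^ q * y := by rw [← pow_succ, ← pow_succ, ← hν, ← hν, hxy.2]
  by_contra hne
  rcases eq_or_eq_of_add_eq_of_mul_eq hs hp with h | h
  · exact hne h.symm
  · exact hS x hx y hy hne h

lemma comp_trace_norm_mem {S : Finset K} {ν τ τ₂ τ₃ lam : K → F}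
    (hν : ∀ x : K, algebraMap F K (ν x) = x ^ (q + 1))
    (hτ : ∀ x : K, algebraMap F K (τ x) = x ^ q + x)
    (hτ₂ : ∀ x : K, algebraMap F K (τ₂ x) = x ^ (2 * q) + x ^ 2)
    (hτ₃ : ∀ x : K, algebraMap F K (τ₃ x) = x ^ (3 * q) + x ^ 3)
    (hlam : ∀ x : K, algebraMap F K (lam x) = x ^ (2 * q + 1) + x ^ (q + 2))
    {𝓕 : Submodule F (S → F)}
    (h𝓕 : 𝓕 = Submodule.span F
      ({fun _ => 1, fun x : S => ν (x : K), fun x : S => ν (x : K) ^ 2,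
        fun x : S => ν (x : K) ^ 3, fun x : S => τ (x : K), fun x : S => τ₂ (x : K),
        fun x : S => τ₃ (x : K), fun x : S => lam (x : K)} : Set (S → F)))
    {f : F × F → F} (hf : f ∈ conicCubeSpace F) :
    f ∘ (fun x : S => (τ x, ν x)) ∈ 𝓕 := by
  have hsq : ∀ x, τ x ^ 2 = τ₂ x + 2 * ν x := fun x =>
    (algebraMap F K).injective <| by
      simp only [map_add, map_mul, map_pow, map_ofNat, hτ, hτ₂, hν]; ring
  have hcube : ∀ x, τ x ^ 3 = τ₃ x + 3 * lam x := fun x =>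
    (algebraMap F K).injective <| by
      simp only [map_add, map_mul, map_pow, map_ofNat, hτ, hτ₃, hlam]; ring
  have hmul : ∀ x, τ x * ν x = lam x := fun x =>
    (algebraMap F K).injective (by simp only [map_mul, hτ, hν, hlam]; ring)
  subst h𝓕
  refine comp_mem_of_conicCubeMonomials ?_ hf
  rintro m (rfl | rfl | rfl | rfl | rfl | rfl | rfl | rfl)
  · exact Submodule.subset_span (Set.mem_insert _ _)
  · show (fun x : S => τ x) ∈ _
    exact Submodule.subset_span (by simp)
  · show (fun x : S => ν x) ∈ _
    exact Submodule.subset_span (by simp)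
  · have h : (Prod.fst ^ 2) ∘ (fun x : S => (τ x, ν x)) =
        (fun x : S => τ₂ x) + (2 : F) • (fun x : S => ν x) := by
      ext x; simp [hsq]
    rw [h]
    exact add_mem (Submodule.subset_span (by simp))
      (Submodule.smul_mem _ _ (Submodule.subset_span (by simp)))
  · show (fun x : S => τ x * ν x) ∈ _
    simp_rw [hmul]
    exact Submodule.subset_span (by simp)
  · show (fun x : S => ν x ^ 2) ∈ _
    exact Submodule.subset_span (by simp)
  · have h : (Prod.fst ^ 3) ∘ (fun x : S => (τ x, ν x)) =
        (fun x : S => τ₃ x) + (3 : F) • (fun x : S => lam x) := by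
      ext x; simp [hcube]
    rw [h]
    exact add_mem (Submodule.subset_span (by simp))
      (Submodule.smul_mem _ _ (Submodule.subset_span (by simp)))
  · show (fun x : S => ν x ^ 3) ∈ _
    exact Submodule.subset_span (by simp)

end TraceNorm

end

theorem statement11_general {q : ℕ}
    (F K : Type*) [Field F] [DecidableEq F]
    [Field K] [Algebra F K]
    (S : Finset K) (hS : ∀ x ∈ S, ∀ y ∈ S, x ≠ y → y ≠ x ^ q)
    (ν τ τ₂ τ₃ lam : K → F)
    (hν : ∀ x : K, algebraMap F K (ν x) = x ^ (q + 1))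
    (hτ : ∀ x : K, algebraMap F K (τ x) = x ^ q + x)
    (hτ₂ : ∀ x : K, algebraMap F K (τ₂ x) = x ^ (2 * q) + x ^ 2)
    (hτ₃ : ∀ x : K, algebraMap F K (τ₃ x) = x ^ (3 * q) + x ^ 3)
    (hlam : ∀ x : K, algebraMap F K (lam x) = x ^ (2 * q + 1) + x ^ (q + 2))
    (𝓕 : Submodule F (S → F))
    (h𝓕 : 𝓕 = Submodule.span F
      ({fun _ => 1, fun x : S => ν (x : K), fun x : S => ν (x : K) ^ 2,
        fun x : S => ν (x : K) ^ 3, fun x : S => τ (x : K), fun x : S => τ₂ (x : K),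
        fun x : S => τ₃ (x : K), fun x : S => lam (x : K)} : Set (S → F))) :
    ∀ u ∈ dualCode 𝓕, u ≠ 0 → 5 ≤ hammingNorm u := by
  classical
  intro u hu hu0
  by_contra! hweight
  obtain ⟨z, hz⟩ := Function.ne_iff.mp hu0
  set φ : S → F × F := fun x => (τ x, ν x)
  have hφ : Function.Injective φ := fun x y h =>
    Subtype.ext (injOn_trace_norm hS hν hτ x.2 y.2 h)
  set supp : Finset S := {i | u i ≠ 0}
  have hR : #((supp.erase z).image φ) ≤ 3 := by
    have hzsupp : z ∈ supp := by simpa [supp] using hz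
    have : #supp ≤ 4 := Nat.le_of_lt_succ hweight
    have := card_erase_of_mem hzsupp
    have := card_image_le (s := supp.erase z) (f := φ)
    omega
  have hzR : φ z ∉ (supp.erase z).image φ := by simp [hφ.eq_iff]
  obtain ⟨f, hf, hfR, hfz⟩ := exists_mem_conicCubeSpace_separates hR hzR
  refine hz (eq_zero_of_mem_dualCode hu (comp_trace_norm_mem hν hτ hτ₂ hτ₃ hlam h𝓕 hf)
    (fun i hi hui => hfR _ (mem_image_of_mem φ (mem_erase.mpr ⟨hi, ?_⟩))) hfz)
  simpa [supp] using hui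

/-- Let `q ≥ 5` be a prime power, `F = F_q`, `K = F_{q²}`, and `S ⊆ K` a finite subset
containing no conjugate pair.  Let `𝓕 ⊆ F^S` be the `F`-span of the eight vectors
obtained by evaluating `1`, `x^{q+1}`, `x^{2(q+1)}`, `x^{3(q+1)}`, `x^q + x`,
`x^{2q} + x²`, `x^{3q} + x³` and `x^{2q+1} + x^{q+2}` at the points of `S` (all of
these values lie in `F`, witnessed by the functions `ν, τ, τ₂, τ₃, lam : K → F`).
Then every nonzero vector of the Euclidean dual `𝓕^⊥` has Hamming weight at
least `5`. -/
theorem statement11 {q : ℕ} (hq : ∃ p e : ℕ, p.Prime ∧ 0 < e ∧ q = p ^ e) (hq5 : 5 ≤ q)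
    (F K : Type*) [Field F] [Fintype F] [DecidableEq F]
    [Field K] [Fintype K] [Algebra F K]
    (hF : Fintype.card F = q) (hK : Fintype.card K = q ^ 2)
    (S : Finset K) (hS : ∀ x ∈ S, ∀ y ∈ S, x ≠ y → y ≠ x ^ q)
    (ν τ τ₂ τ₃ lam : K → F)
    (hν : ∀ x : K, algebraMap F K (ν x) = x ^ (q + 1))
    (hν₂ : ∀ x : K, algebraMap F K (ν x ^ 2) = x ^ (2 * (q + 1)))
    (hν₃ : ∀ x : K, algebraMap F K (ν x ^ 3) = x ^ (3 * (q + 1)))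
    (hτ : ∀ x : K, algebraMap F K (τ x) = x ^ q + x)
    (hτ₂ : ∀ x : K, algebraMap F K (τ₂ x) = x ^ (2 * q) + x ^ 2)
    (hτ₃ : ∀ x : K, algebraMap F K (τ₃ x) = x ^ (3 * q) + x ^ 3)
    (hlam : ∀ x : K, algebraMap F K (lam x) = x ^ (2 * q + 1) + x ^ (q + 2))
    (𝓕 : Submodule F (S → F))
    (h𝓕 : 𝓕 = Submodule.span F
      ({fun _ => 1, fun x : S => ν (x : K), fun x : S => ν (x : K) ^ 2,
        fun x : S => ν (x : K) ^ 3, fun x : S => τ (x : K), fun x : S => τ₂ (x : K),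
        fun x : S => τ₃ (x : K), fun x : S => lam (x : K)} : Set (S → F))) :
    ∀ u ∈ dualCode 𝓕, u ≠ 0 → 5 ≤ hammingNorm u :=
  statement11_general F K S hS ν τ τ₂ τ₃ lam hν hτ hτ₂ hτ₃ hlam 𝓕 h𝓕
end

section
/- Let q be a prime power and let 0 ≤ t ≤ q, 2 ≤ m ≤ q−1, and 0 ≤ ℓ ≤ m−1 be integers. Then the Xing–Ling code C_q(t,m,ℓ) is a linear code over F_q of length n = t + (q²−q)/2, dimension m(m−1)/2 + ℓ + 1, and minimum distance at least the designed distance δ = n − (q(m−1) + ℓ + g)/2, where g = min{max{2(m−2), m+ℓ−1}, t} if q is odd, g = max{min{m−2, t}, 2t−q} if q is even and ℓ ≤ m−2, and g = max{min{m−1, t}, 2t−q} if q is even and ℓ = m−1. -/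
/-- The Xing–Ling basis polynomial `e_{i,j}(x) = x^{iq+j} + x^{jq+i}` if `i ≠ j`,
and `e_{i,j}(x) = x^{iq+j}` if `i = j`, viewed as a function `K → K`. -/
def ePoly (K : Type*) [Field K] (q i j : ℕ) (x : K) : K :=
  if i = j then x ^ (i * q + j) else x ^ (i * q + j) + x ^ (j * q + i)

/-- The generating set of the Xing–Ling code `C_q(t,m,ℓ)`: the evaluations, at the
points `α_1, …, α_t, β_1, …, β_r`, of the polynomials `e_{i,j}` for
`0 ≤ i ≤ j ≤ m−2` together with `e_{i,m−1}` for `0 ≤ i ≤ ℓ`.  The `F`-valued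
evaluation is given by `E : ℕ → ℕ → K → F` (a lift of `ePoly`, whose values lie in
the subfield). -/
def XLgen (F K : Type*) {t r : ℕ} (α : Fin t → K) (β : Fin r → K)
    (E : ℕ → ℕ → K → F) (m ℓ : ℕ) : Set (Fin t ⊕ Fin r → F) :=
  {w | ∃ i j : ℕ, i ≤ j ∧ j ≤ m - 2 ∧ w = fun p => E i j (Sum.elim α β p)} ∪
  {w | ∃ i : ℕ, i ≤ ℓ ∧ w = fun p => E i (m - 1) (Sum.elim α β p)}

open Polynomial Finset

theorem Polynomial.sum_rootMultiplicity_le_natDegree {R : Type*} [CommRing R] [IsDomain R]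
    (P : R[X]) (s : Finset R) : ∑ a ∈ s, P.rootMultiplicity a ≤ P.natDegree := by
  classical
  calc ∑ a ∈ s, P.rootMultiplicity a = ∑ a ∈ s, P.roots.count a := by simp only [count_roots]
    _ ≤ ∑ a ∈ P.roots.toFinset, P.roots.count a :=
        sum_le_sum_of_ne_zero fun a _ ha => Multiset.mem_toFinset.2 (Multiset.count_ne_zero.1 ha)
    _ = Multiset.card P.roots := Multiset.toFinset_sum_count_eq _
    _ ≤ P.natDegree := P.card_roots'

theorem mem_range_algebraMap_of_pow_card_eq_self {F K : Type*} [Field F] [Fintype F] [Field K]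
    [Algebra F K] {x : K} (hx : x ^ Fintype.card F = x) : x ∈ Set.range (algebraMap F K) := by
  have hq : 1 < Fintype.card F := Fintype.one_lt_card
  have hmonic : (X ^ Fintype.card F - X : F[X]).Monic :=
    monic_X_pow_sub (by rw [degree_X]; exact_mod_cast hq)
  have hroots := hmonic.roots_map_of_card_eq_natDegree (algebraMap F K) (by
    rw [FiniteField.roots_X_pow_card_sub_X, FiniteField.X_pow_card_sub_X_natDegree_eq F hq]; rfl)
  have hxroot : x ∈ ((X ^ Fintype.card F - X : F[X]).map (algebraMap F K)).roots := by
    rw [mem_roots (map_monic_ne_zero hmonic)]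
    simp [hx]
  rw [← hroots, FiniteField.roots_X_pow_card_sub_X] at hxroot
  obtain ⟨a, -, rfl⟩ := Multiset.mem_map.1 hxroot
  exact ⟨a, rfl⟩

theorem FiniteField.two_eq_zero_iff_even_card {K : Type*} [Field K] [Fintype K] :
    (2 : K) = 0 ↔ Even (Fintype.card K) := by
  rw [Nat.even_iff, ← FiniteField.even_card_iff_char_two]
  refine ⟨fun h => ?_, fun h => ?_⟩
  · by_contra hne
    exact Ring.two_ne_zero hne h
  · have : CharP K 2 := ringChar.of_eq h
    exact CharTwo.two_eq_zero

theorem Nat.eq_and_eq_of_mul_add_eq_mul_add {q i j i' j' : ℕ} (hj : j < q) (hj' : j' < q)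
    (h : i * q + j = i' * q + j') : i = i' ∧ j = j' := by
  have hq : 0 < q := by omega
  have hdiv := congrArg (· / q) h
  have hmod := congrArg (· % q) h
  simp only [Nat.add_comm (_ * q), Nat.add_mul_div_right _ _ hq, Nat.div_eq_of_lt hj,
    Nat.div_eq_of_lt hj', Nat.add_mul_mod_self_right, Nat.mod_eq_of_lt hj,
    Nat.mod_eq_of_lt hj', zero_add] at hdiv hmod
  exact ⟨hdiv, hmod⟩

theorem Polynomial.card_le_natDegree_of_forall_isRoot {R : Type*} [CommRing R] [IsDomain R]
    {p : R[X]} (hp : p ≠ 0) {Z : Finset R} (hZ : ∀ a ∈ Z, p.IsRoot a) : #Z ≤ p.natDegree :=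
  card_le_degree_of_subset_roots fun a ha => (mem_roots hp).2 (hZ a ha)

theorem sq_injective_of_two_eq_zero {K : Type*} [Field K] (h2 : (2 : K) = 0) :
    Function.Injective fun a : K => a ^ 2 := fun a b h => by
  have : (a - b) ^ 2 = 0 := by linear_combination (h : a ^ 2 = b ^ 2) + (b ^ 2 - a * b) * h2
  exact sub_eq_zero.1 (pow_eq_zero_iff two_ne_zero |>.1 this)

theorem pow_eq_self_of_mem_range_algebraMap {F K : Type*} [Field F] [Fintype F] [Field K]
    [Algebra F K] {q : ℕ} (hF : Fintype.card F = q) {x : K}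
    (hx : x ∈ Set.range (algebraMap F K)) : x ^ q = x := by
  obtain ⟨a, rfl⟩ := hx
  rw [← map_pow, ← hF, FiniteField.pow_card]

theorem hammingNorm_add_card_zeros {ι κ M : Type*} [Fintype ι] [Fintype κ] [Zero M]
    [DecidableEq M] (v : ι ⊕ κ → M) :
    hammingNorm v + #{i | v (Sum.inl i) = 0} + #{j | v (Sum.inr j) = 0} =
      Fintype.card ι + Fintype.card κ := by
  have hzeros : #{x | v x = 0} = #{i | v (Sum.inl i) = 0} + #{j | v (Sum.inr j) = 0} := by
    simp only [card_filter, Fintype.sum_sum_type]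
  rw [add_assoc, ← hzeros, hammingNorm, add_comm, card_filter_add_card_filter_not, card_univ,
    Fintype.card_sum]

section Frobenius

variable {K : Type*} [Field K] [Fintype K] {q : ℕ}

theorem pow_pow_eq_self_of_card_eq_sq (hK : Fintype.card K = q ^ 2) (x : K) : (x ^ q) ^ q = x := by
  rw [← pow_mul, ← sq, ← hK, FiniteField.pow_card]

theorem mul_card_add_two_mul_card_le_natDegree (hK : Fintype.card K = q ^ 2) {P : K[X]}
    (hP : P ≠ 0) (hPfrob : ∀ x, P.eval (x ^ q) = P.eval x) {k : ℕ} {S T : Finset K}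
    (hS : ∀ a ∈ S, a ^ q = a ∧ k ≤ P.rootMultiplicity a) (hT : ∀ b ∈ T, b ^ q ∉ T ∧ P.IsRoot b) :
    k * #S + 2 * #T ≤ P.natDegree := by
  classical
  have hfrob := pow_pow_eq_self_of_card_eq_sq hK
  set Tq := T.image (· ^ q)
  have hTq : #Tq = #T := card_image_of_injective _ (Function.LeftInverse.injective hfrob)
  have hST : Disjoint S T := disjoint_left.2 fun a haS haT =>
    (hT a haT).1 (by rwa [(hS a haS).1])
  have hSTq : Disjoint (S ∪ T) Tq := by
    refine disjoint_left.2 fun a ha haTq => ?_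
    obtain ⟨b, hbT, rfl⟩ := mem_image.1 haTq
    rcases mem_union.1 ha with ha | ha
    · have := (hS _ ha).1
      rw [hfrob] at this
      exact (hT b hbT).1 (this ▸ hbT)
    · exact (hT b hbT).1 ha
  have hmult : ∀ b ∈ T ∪ Tq, 1 ≤ P.rootMultiplicity b := by
    intro b hb
    refine (rootMultiplicity_pos hP).2 ?_
    rcases mem_union.1 hb with hb | hb
    · exact (hT b hb).2
    · obtain ⟨b, hbT, rfl⟩ := mem_image.1 hb
      exact (hPfrob b).trans (hT b hbT).2
  calc k * #S + 2 * #T = #S • k + #(T ∪ Tq) • 1 := by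
        rw [card_union_of_disjoint (disjoint_union_left.1 hSTq).2, hTq, smul_eq_mul, smul_eq_mul,
          mul_one]
        ring
    _ ≤ ∑ a ∈ S, P.rootMultiplicity a + ∑ a ∈ T ∪ Tq, P.rootMultiplicity a :=
        add_le_add (card_nsmul_le_sum _ _ _ fun a ha => (hS a ha).2) (card_nsmul_le_sum _ _ _ hmult)
    _ = ∑ a ∈ S ∪ T ∪ Tq, P.rootMultiplicity a := by
        rw [sum_union hSTq, sum_union hST, sum_union (disjoint_union_left.1 hSTq).2, add_assoc]
    _ ≤ P.natDegree := P.sum_rootMultiplicity_le_natDegree _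

end Frobenius

section XLPoly

variable (K : Type*) [Field K] (q : ℕ) {i j : ℕ}

noncomputable def xlPoly (i j : ℕ) : K[X] :=
  if i = j then X ^ (i * q + j) else X ^ (i * q + j) + X ^ (j * q + i)

noncomputable def xlRestrPoly (i j : ℕ) : K[X] :=
  C (if i = j then 1 else 2) * X ^ (i + j)

variable {K q}

theorem eval_xlPoly (x : K) : (xlPoly K q i j).eval x = ePoly K q i j x := by
  unfold xlPoly ePoly; split_ifs <;> simp

theorem natDegree_xlPoly_le (hij : i ≤ j) (hq : 0 < q) :
    (xlPoly K q i j).natDegree ≤ j * q + i := by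
  have : i * q + j ≤ j * q + i := by nlinarith
  unfold xlPoly
  split_ifs
  · exact (natDegree_X_pow_le _).trans this
  · exact (natDegree_add_le _ _).trans (by simp only [natDegree_X_pow]; omega)

theorem pow_pow_mul_add_swap {x : K} (hx : (x ^ q) ^ q = x) (a b : ℕ) :
    (x ^ q) ^ (a * q + b) = x ^ (b * q + a) := by
  rw [pow_add, mul_comm a, pow_mul, hx, ← pow_mul, ← pow_add, mul_comm q b, add_comm]

theorem pow_mul_add_of_pow_eq_self {a : K} (ha : a ^ q = a) (b d : ℕ) :
    a ^ (b * q + d) = a ^ (b + d) := by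
  rw [pow_add, mul_comm b, pow_mul, ha, ← pow_add]

theorem eval_pow_xlPoly {x : K} (hx : (x ^ q) ^ q = x) :
    (xlPoly K q i j).eval (x ^ q) = (xlPoly K q i j).eval x := by
  unfold xlPoly
  split_ifs with h
  · subst h; simp only [eval_pow, eval_X, pow_pow_mul_add_swap hx]
  · simp only [eval_add, eval_pow, eval_X]
    rw [pow_pow_mul_add_swap hx, pow_pow_mul_add_swap hx, add_comm]

theorem eval_xlPoly_of_pow_eq_self {a : K} (ha : a ^ q = a) :
    (xlPoly K q i j).eval a = (xlRestrPoly K i j).eval a := by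
  unfold xlPoly xlRestrPoly
  split_ifs
  · simp [pow_mul_add_of_pow_eq_self ha]
  · simp only [eval_add, eval_pow, eval_X, eval_mul, eval_C, pow_mul_add_of_pow_eq_self ha,
      add_comm j i]
    ring

theorem natDegree_xlRestrPoly_le : (xlRestrPoly K i j).natDegree ≤ i + j :=
  (natDegree_C_mul_le _ _).trans (natDegree_X_pow_le _)

theorem eval_xlRestrPoly_of_two_eq_zero (h2 : (2 : K) = 0) (a : K) :
    (xlRestrPoly K i j).eval a = if i = j then (a ^ 2) ^ i else 0 := by
  unfold xlRestrPoly
  split_ifs with h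
  · subst h; simp [← pow_mul, two_mul]
  · simp [h2]

theorem eval_derivative_X_pow_mul (n : ℕ) (a : K) :
    (derivative (X ^ n : K[X])).eval a * a = n * a ^ n := by
  rcases n with _ | n
  · simp
  · rw [derivative_X_pow, Nat.add_sub_cancel]
    simp only [eval_mul, eval_C, eval_pow, eval_X, pow_succ]
    ring

theorem two_mul_eval_derivative_xlPoly_mul {a : K} (ha : a ^ q = a) (hq : (q : K) = 0) :
    2 * ((derivative (xlPoly K q i j)).eval a * a) =
      (derivative (xlRestrPoly K i j)).eval a * a := by
  have hcast (b d : ℕ) : ((b * q + d : ℕ) : K) = d := by push_cast [hq]; ring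
  unfold xlPoly xlRestrPoly
  rw [derivative_C_mul, eval_mul, eval_C, mul_assoc, eval_derivative_X_pow_mul]
  split_ifs with h
  · subst h
    rw [eval_derivative_X_pow_mul, hcast, pow_mul_add_of_pow_eq_self ha]
    push_cast; ring
  · rw [derivative_add, eval_add, add_mul, eval_derivative_X_pow_mul, eval_derivative_X_pow_mul,
      hcast, hcast, pow_mul_add_of_pow_eq_self ha, pow_mul_add_of_pow_eq_self ha, add_comm j i]
    push_cast; ring

theorem coeff_one_xlRestrPoly (hij : i ≤ j) (hjq : j < q) :
    (xlRestrPoly K i j).coeff 1 = 2 * (xlPoly K q i j).coeff 1 := by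
  unfold xlPoly xlRestrPoly
  rw [coeff_C_mul]
  split_ifs with h
  · subst h
    have : i * q + i ≠ 1 := by rcases i with _ | i <;> [simp; nlinarith]
    rw [coeff_X_pow, coeff_X_pow, if_neg (by omega), if_neg this.symm]
    ring
  · rw [coeff_add, coeff_X_pow, coeff_X_pow, coeff_X_pow]
    rcases Nat.lt_or_ge 1 j with hj | hj
    · rw [if_neg (by omega), if_neg (by nlinarith), if_neg (by nlinarith)]; ring
    · obtain ⟨rfl, rfl⟩ : i = 0 ∧ j = 1 := by omega
      rw [if_pos rfl, if_pos (by simp), if_neg (by omega)]; ring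

theorem coeff_xlPoly_mul_add {i' j' : ℕ} (hij : i ≤ j) (hjq : j < q) (hij' : i' ≤ j')
    (hjq' : j' < q) : (xlPoly K q i' j').coeff (j * q + i) = if i' = i ∧ j' = j then 1 else 0 := by
  unfold xlPoly
  split_ifs with h₁ h₂ h₂
  · obtain ⟨rfl, rfl⟩ := h₂
    rw [coeff_X_pow, if_pos (by rw [h₁])]
  · rw [coeff_X_pow, if_neg]
    intro h
    have := Nat.eq_and_eq_of_mul_add_eq_mul_add (by omega) (by omega) h
    omega
  · obtain ⟨rfl, rfl⟩ := h₂
    rw [coeff_add, coeff_X_pow, coeff_X_pow, if_neg, if_pos rfl]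
    · simp
    intro h
    have := Nat.eq_and_eq_of_mul_add_eq_mul_add (by omega) (by omega) h
    omega
  · rw [coeff_add, coeff_X_pow, coeff_X_pow, if_neg, if_neg, add_zero]
    · intro h
      obtain ⟨rfl, rfl⟩ := Nat.eq_and_eq_of_mul_add_eq_mul_add (by omega) (by omega) h
      exact h₂ ⟨rfl, rfl⟩
    · intro h
      have := Nat.eq_and_eq_of_mul_add_eq_mul_add (by omega) (by omega) h
      omega

end XLPoly


def xlIndex (m ℓ : ℕ) : Finset (ℕ × ℕ) :=
  (range m ×ˢ range m).filter fun k => k.1 ≤ k.2 ∧ k.2 ≤ m - 2 ∨ k.1 ≤ ℓ ∧ k.2 = m - 1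

section XLIndex

variable {m ℓ : ℕ}

theorem mem_xlIndex (hm : 2 ≤ m) (hℓ : ℓ < m) {k : ℕ × ℕ} :
    k ∈ xlIndex m ℓ ↔ k.1 ≤ k.2 ∧ k.2 ≤ m - 2 ∨ k.1 ≤ ℓ ∧ k.2 = m - 1 := by
  simp only [xlIndex, mem_filter, mem_product, mem_range]
  omega

theorem card_xlIndex (hm : 2 ≤ m) (hℓ : ℓ < m) : #(xlIndex m ℓ) = m * (m - 1) / 2 + ℓ + 1 := by
  obtain ⟨n, rfl⟩ : ∃ n, m = n + 1 := ⟨m - 1, by omega⟩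
  have hfiber (j : ℕ) (hj : j ≤ n) :
      #((range (n + 1)).filter fun i => i ≤ j ∧ j ≤ n + 1 - 2 ∨ i ≤ ℓ ∧ j = n + 1 - 1) =
        if j < n then j + 1 else ℓ + 1 := by
    split_ifs with h
    · rw [← card_range (j + 1)]; congr 1; ext i; simp only [mem_filter, mem_range]; omega
    · rw [← card_range (ℓ + 1)]; congr 1; ext i; simp only [mem_filter, mem_range]; omega
  have hgauss : ∑ j ∈ range n, (j + 1) = (n + 1) * n / 2 := by
    simpa [sum_range_succ'] using sum_range_id (n + 1)
  rw [xlIndex, card_filter, sum_product_right]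
  simp_rw [← card_filter]
  rw [sum_congr rfl fun j hj => hfiber j (by simpa [Nat.lt_succ_iff] using hj), sum_range_succ,
    if_neg (lt_irrefl n), sum_congr rfl fun j hj => if_pos (mem_range.1 hj), hgauss,
    Nat.add_sub_cancel, add_assoc]

end XLIndex

section XLComb

variable {K : Type*} [Field K] (q : ℕ) {s : Finset (ℕ × ℕ)}

noncomputable def xlComb (c : s → K) : K[X] :=
  ∑ k, c k • xlPoly K q k.1.1 k.1.2

noncomputable def xlRestrComb (c : s → K) : K[X] :=
  ∑ k, c k • xlRestrPoly K k.1.1 k.1.2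

noncomputable def xlDiagComb (c : s → K) : K[X] :=
  ∑ k, (if k.1.1 = k.1.2 then c k else 0) • X ^ k.1.1

variable {q}

theorem natDegree_xlComb_le {D : ℕ} (hq : 0 < q) (hs : ∀ k ∈ s, k.1 ≤ k.2 ∧ k.2 * q + k.1 ≤ D)
    (c : s → K) : (xlComb q c).natDegree ≤ D :=
  natDegree_sum_le_of_forall_le _ _ fun k _ => (natDegree_smul_le _ _).trans <|
    (natDegree_xlPoly_le (hs k k.2).1 hq).trans (hs k k.2).2

theorem natDegree_xlRestrComb_le {D : ℕ} (hs : ∀ k ∈ s, k.1 + k.2 ≤ D) (c : s → K) :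
    (xlRestrComb c).natDegree ≤ D :=
  natDegree_sum_le_of_forall_le _ _ fun k _ => (natDegree_smul_le _ _).trans <|
    natDegree_xlRestrPoly_le.trans (hs k k.2)

theorem natDegree_xlDiagComb_le {D : ℕ} (hs : ∀ k ∈ s, k.1 = k.2 → k.1 ≤ D) (c : s → K) :
    (xlDiagComb c).natDegree ≤ D := by
  refine natDegree_sum_le_of_forall_le _ _ fun k _ => ?_
  split_ifs with h
  · exact (natDegree_smul_le _ _).trans ((natDegree_X_pow _).trans_le (hs k k.2 h))
  · simp

theorem eval_pow_xlComb {x : K} (hx : (x ^ q) ^ q = x) (c : s → K) :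
    (xlComb q c).eval (x ^ q) = (xlComb q c).eval x := by
  simp only [xlComb, eval_finsetSum, eval_smul, eval_pow_xlPoly hx]

theorem eval_xlComb_of_pow_eq_self {a : K} (ha : a ^ q = a) (c : s → K) :
    (xlComb q c).eval a = (xlRestrComb c).eval a := by
  simp only [xlComb, xlRestrComb, eval_finsetSum, eval_smul, eval_xlPoly_of_pow_eq_self ha]

theorem eval_xlRestrComb_of_two_eq_zero (h2 : (2 : K) = 0) (c : s → K) (a : K) :
    (xlRestrComb c).eval a = (xlDiagComb c).eval (a ^ 2) := by
  simp only [xlRestrComb, xlDiagComb, eval_finsetSum, eval_smul, eval_xlRestrPoly_of_two_eq_zero h2,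
    eval_pow, eval_X]
  refine sum_congr rfl fun k _ => ?_
  split_ifs <;> simp

theorem coeff_xlComb (hs : ∀ k ∈ s, k.1 ≤ k.2 ∧ k.2 < q) (c : s → K) (k : s) :
    (xlComb q c).coeff (k.1.2 * q + k.1.1) = c k := by
  rw [xlComb, finsetSum_coeff, sum_eq_single k]
  · rw [coeff_smul, coeff_xlPoly_mul_add (hs k k.2).1 (hs k k.2).2 (hs k k.2).1 (hs k k.2).2,
      if_pos ⟨rfl, rfl⟩, smul_eq_mul, mul_one]
  · intro k' _ hk'
    rw [coeff_smul, coeff_xlPoly_mul_add (hs k k.2).1 (hs k k.2).2 (hs k' k'.2).1 (hs k' k'.2).2,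
      if_neg fun h => hk' (Subtype.ext (Prod.ext h.1 h.2)), smul_zero]
  · simp

theorem xlComb_ne_zero (hs : ∀ k ∈ s, k.1 ≤ k.2 ∧ k.2 < q) {c : s → K} (hc : c ≠ 0) :
    xlComb q c ≠ 0 := by
  obtain ⟨k, hk⟩ := Function.ne_iff.1 hc
  intro h
  exact hk (by rw [← coeff_xlComb hs c k, h, coeff_zero]; rfl)

theorem coeff_one_xlRestrComb (hs : ∀ k ∈ s, k.1 ≤ k.2 ∧ k.2 < q) (c : s → K) :
    (xlRestrComb c).coeff 1 = 2 * (xlComb q c).coeff 1 := by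
  simp only [xlComb, xlRestrComb, finsetSum_coeff, coeff_smul, mul_sum, smul_eq_mul,
    coeff_one_xlRestrPoly (hs _ (Subtype.prop _)).1 (hs _ (Subtype.prop _)).2]
  exact sum_congr rfl fun k _ => by ring

theorem two_mul_eval_derivative_xlComb_mul {a : K} (ha : a ^ q = a) (hq : (q : K) = 0) (c : s → K) :
    2 * ((derivative (xlComb q c)).eval a * a) = (derivative (xlRestrComb c)).eval a * a := by
  simp only [xlComb, xlRestrComb, derivative_sum, derivative_smul, eval_finsetSum, eval_smul,
    smul_eq_mul, sum_mul, mul_sum]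
  refine sum_congr rfl fun k _ => ?_
  simp only [mul_assoc (c k)]
  rw [← two_mul_eval_derivative_xlPoly_mul ha hq]
  ring

end XLComb

section ZeroCount

variable {K : Type*} [Field K] {q : ℕ} {s : Finset (ℕ × ℕ)} {c : s → K}

theorem isRoot_derivative_xlComb (hq : (q : K) = 0) (h2 : (2 : K) ≠ 0)
    (hs : ∀ k ∈ s, k.1 ≤ k.2 ∧ k.2 < q) (hQ : xlRestrComb c = 0) {a : K} (ha : a ^ q = a) :
    (derivative (xlComb q c)).IsRoot a := by
  by_cases ha0 : a = 0
  -- `two_mul_eval_derivative_xlComb_mul` is vacuous at `0`, where `P'(0)` is the coefficient of `X`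
  · have h := coeff_one_xlRestrComb (q := q) hs c
    rw [hQ, coeff_zero, eq_comm, mul_eq_zero, or_iff_right h2] at h
    rw [ha0, IsRoot, ← coeff_zero_eq_eval_zero, coeff_derivative, zero_add, h, zero_mul]
  · have h := two_mul_eval_derivative_xlComb_mul ha hq c
    rw [hQ, derivative_zero, eval_zero, zero_mul, mul_eq_zero, or_iff_right h2, mul_eq_zero,
      or_iff_left ha0] at h
    exact h

variable [Fintype K] {A S T : Finset K}

theorem mul_card_add_two_mul_card_le_natDegree_xlComb (hK : Fintype.card K = q ^ 2)
    (hP : xlComb q c ≠ 0) {k : ℕ} (hS : ∀ a ∈ S, a ^ q = a ∧ k ≤ (xlComb q c).rootMultiplicity a)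
    (hT : ∀ b ∈ T, b ^ q ∉ T ∧ (xlComb q c).IsRoot b) :
    k * #S + 2 * #T ≤ (xlComb q c).natDegree :=
  mul_card_add_two_mul_card_le_natDegree hK hP
    (fun x => eval_pow_xlComb (pow_pow_eq_self_of_card_eq_sq hK x) c) hS hT

theorem card_add_two_mul_card_le_natDegree_xlComb (hK : Fintype.card K = q ^ 2)
    (hP : xlComb q c ≠ 0) (hA : ∀ a ∈ A, a ^ q = a ∧ (xlComb q c).IsRoot a)
    (hT : ∀ b ∈ T, b ^ q ∉ T ∧ (xlComb q c).IsRoot b) :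
    #A + 2 * #T ≤ (xlComb q c).natDegree := by
  simpa using mul_card_add_two_mul_card_le_natDegree_xlComb hK hP
    (fun a ha => ⟨(hA a ha).1, (rootMultiplicity_pos hP).2 (hA a ha).2⟩) hT

theorem card_le_or_of_two_ne_zero (hK : Fintype.card K = q ^ 2) (h2 : (2 : K) ≠ 0)
    (hs : ∀ k ∈ s, k.1 ≤ k.2 ∧ k.2 < q) (hP : xlComb q c ≠ 0)
    (hA : ∀ a ∈ A, a ^ q = a ∧ (xlComb q c).IsRoot a) (hS : ∀ a ∈ S, a ^ q = a)
    (hT : ∀ b ∈ T, b ^ q ∉ T ∧ (xlComb q c).IsRoot b) :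
    #A ≤ (xlRestrComb c).natDegree ∨ 2 * #S + 2 * #T ≤ (xlComb q c).natDegree := by
  by_cases hQ : xlRestrComb c = 0
  · have hq : (q : K) = 0 := by
      have := FiniteField.cast_card_eq_zero K
      rw [hK, Nat.cast_pow] at this
      exact pow_eq_zero_iff two_ne_zero |>.1 this
    refine Or.inr (mul_card_add_two_mul_card_le_natDegree_xlComb hK hP
      (fun a ha => ⟨hS a ha, (one_lt_rootMultiplicity_iff_isRoot hP).2 ⟨?_, ?_⟩⟩) hT)
    · rw [IsRoot, eval_xlComb_of_pow_eq_self (hS a ha), hQ, eval_zero]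
    · exact isRoot_derivative_xlComb hq h2 hs hQ (hS a ha)
  · refine Or.inl (card_le_natDegree_of_forall_isRoot hQ fun a ha => ?_)
    rw [IsRoot, ← eval_xlComb_of_pow_eq_self (hA a ha).1]
    exact (hA a ha).2

theorem card_le_or_of_two_eq_zero (hK : Fintype.card K = q ^ 2) (h2 : (2 : K) = 0)
    (hP : xlComb q c ≠ 0) (hA : ∀ a ∈ A, a ^ q = a ∧ (xlComb q c).IsRoot a)
    (hS : ∀ a ∈ S, a ^ q = a) (hT : ∀ b ∈ T, b ^ q ∉ T ∧ (xlComb q c).IsRoot b) :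
    #A ≤ (xlDiagComb c).natDegree ∨ #S + 2 * #T ≤ (xlComb q c).natDegree := by
  have heval {a : K} (ha : a ^ q = a) : (xlComb q c).eval a = (xlDiagComb c).eval (a ^ 2) := by
    rw [eval_xlComb_of_pow_eq_self ha, eval_xlRestrComb_of_two_eq_zero h2]
  by_cases hR : xlDiagComb c = 0
  · refine Or.inr (card_add_two_mul_card_le_natDegree_xlComb hK hP
      (fun a ha => ⟨hS a ha, ?_⟩) hT)
    rw [IsRoot, heval (hS a ha), hR, eval_zero]
  · classical
    left
    rw [← card_image_of_injective A (sq_injective_of_two_eq_zero h2)]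
    refine card_le_natDegree_of_forall_isRoot hR fun b hb => ?_
    obtain ⟨a, ha, rfl⟩ := mem_image.1 hb
    rw [IsRoot, ← heval (hA a ha).1]
    exact (hA a ha).2

end ZeroCount

section XLBound

variable {m ℓ : ℕ}

theorem bounds_of_mem_xlIndex (hm : 2 ≤ m) (hℓ : ℓ ≤ m - 1) {k : ℕ × ℕ} (hk : k ∈ xlIndex m ℓ) :
    k.1 ≤ k.2 ∧ k.2 ≤ m - 1 ∧ k.1 + k.2 ≤ max (2 * (m - 2)) (m - 1 + ℓ) ∧
      (k.1 = k.2 → k.1 ≤ if ℓ ≤ m - 2 then m - 2 else m - 1) := by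
  rw [mem_xlIndex hm (by omega)] at hk
  split_ifs <;> omega

theorem mul_add_le_of_mem_xlIndex {q : ℕ} (hm : 2 ≤ m) (hℓ : ℓ ≤ m - 1) (hmq : m ≤ q + 2)
    {k : ℕ × ℕ} (hk : k ∈ xlIndex m ℓ) : k.2 * q + k.1 ≤ (m - 1) * q + ℓ := by
  rcases (mem_xlIndex hm (by omega)).1 hk with ⟨h1, h2⟩ | ⟨h1, h2⟩
  · have : k.2 * q + q ≤ (m - 1) * q := by
      rw [← Nat.succ_mul]; exact Nat.mul_le_mul_right _ (by omega)
    omega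
  · rw [h2]; omega

theorem lt_of_mem_xlIndex {q : ℕ} (hm : 2 ≤ m) (hmq : m ≤ q - 1) (hℓ : ℓ ≤ m - 1) :
    ∀ k ∈ xlIndex m ℓ, k.1 ≤ k.2 ∧ k.2 < q := fun _ hk => by
  have := bounds_of_mem_xlIndex hm hℓ hk; omega

variable {K : Type*} [Field K] {q : ℕ}

theorem natDegree_xlComb_xlIndex_le (hm : 2 ≤ m) (hmq : m ≤ q - 1) (hℓ : ℓ ≤ m - 1)
    (c : xlIndex m ℓ → K) : (xlComb q c).natDegree ≤ (m - 1) * q + ℓ :=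
  natDegree_xlComb_le (by omega) (fun _ hk => ⟨(bounds_of_mem_xlIndex hm hℓ hk).1,
    mul_add_le_of_mem_xlIndex hm hℓ (by omega) hk⟩) c

variable [Fintype K] {t : ℕ} {c : xlIndex m ℓ → K} {A S T : Finset K}

theorem two_mul_card_add_card_le (hK : Fintype.card K = q ^ 2) (ht : t ≤ q) (hm : 2 ≤ m)
    (hmq : m ≤ q - 1) (hℓ : ℓ ≤ m - 1) (hP : xlComb q c ≠ 0)
    (hA : ∀ a ∈ A, a ^ q = a ∧ (xlComb q c).IsRoot a) (hAt : #A ≤ t)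
    (hS : ∀ a ∈ S, a ^ q = a) (hSq : #S = q) (hT : ∀ b ∈ T, b ^ q ∉ T ∧ (xlComb q c).IsRoot b)
    (g : ℤ)
    (hg : g = if Odd q then min (max (2 * ((m : ℤ) - 2)) ((m : ℤ) + ℓ - 1)) (t : ℤ)
      else if ℓ ≤ m - 2 then max (min ((m : ℤ) - 2) (t : ℤ)) (2 * (t : ℤ) - q)
      else max (min ((m : ℤ) - 1) (t : ℤ)) (2 * (t : ℤ) - q)) :
    2 * ((#A : ℤ) + #T) ≤ ((m - 1) * q + ℓ : ℕ) + g := by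
  have hdeg := natDegree_xlComb_xlIndex_le hm hmq hℓ c
  have hcount := card_add_two_mul_card_le_natDegree_xlComb hK hP hA hT
  have h2 : (2 : K) = 0 ↔ ¬Odd q := by
    rw [FiniteField.two_eq_zero_iff_even_card, hK, Nat.even_pow' two_ne_zero, Nat.not_odd_iff_even]
  by_cases hodd : Odd q
  · have hres := natDegree_xlRestrComb_le (fun k hk => (bounds_of_mem_xlIndex hm hℓ hk).2.2.1) c
    rcases card_le_or_of_two_ne_zero hK (mt h2.1 (not_not.2 hodd))
      (lt_of_mem_xlIndex hm hmq hℓ) hP hA hS hT with h | h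
    all_goals
      rw [hg, if_pos hodd]
      omega
  · have hdiag := natDegree_xlDiagComb_le (fun k hk => (bounds_of_mem_xlIndex hm hℓ hk).2.2.2) c
    rcases card_le_or_of_two_eq_zero hK (h2.2 hodd) hP hA hS hT with h | h
    all_goals
      rw [hg, if_neg hodd]
      split_ifs at hdiag ⊢ <;> omega

end XLBound

section XLCode

variable {F K : Type*} {q t r m ℓ : ℕ} {α : Fin t → K} {β : Fin r → K} {E : ℕ → ℕ → K → F}

def xlWord (α : Fin t → K) (β : Fin r → K) (E : ℕ → ℕ → K → F) (m ℓ : ℕ) (k : xlIndex m ℓ) :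
    Fin t ⊕ Fin r → F :=
  fun p => E k.1.1 k.1.2 (Sum.elim α β p)

theorem XLgen_eq_range_xlWord (hm : 2 ≤ m) (hℓ : ℓ ≤ m - 1) :
    XLgen F K α β E m ℓ = Set.range (xlWord α β E m ℓ) := by
  ext w
  simp only [XLgen, Set.mem_union, Set.mem_ofPred_eq, Set.mem_range, Subtype.exists,
    mem_xlIndex hm (show ℓ < m by omega)]
  constructor
  · rintro (⟨i, j, hij, hj, rfl⟩ | ⟨i, hi, rfl⟩)
    · exact ⟨(i, j), Or.inl ⟨hij, hj⟩, rfl⟩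
    · exact ⟨(i, m - 1), Or.inr ⟨hi, rfl⟩, rfl⟩
  · rintro ⟨⟨i, j⟩, ⟨hij, hj⟩ | ⟨hi, hj⟩, rfl⟩
    · exact Or.inl ⟨i, j, hij, hj, rfl⟩
    · exact Or.inr ⟨i, hi, by simp only at hj; subst hj; rfl⟩

variable [Field F] [Field K] [Algebra F K]

theorem pow_notMem_image_of_ne_pow [Fintype F] [DecidableEq K] (hF : Fintype.card F = q)
    (hβF : ∀ i, β i ∉ Set.range (algebraMap F K)) (hβ : ∀ i j, i ≠ j → β i ≠ β j ∧ β j ≠ β i ^ q)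
    (B : Finset (Fin r)) : ∀ b ∈ B.image β, b ^ q ∉ B.image β := by
  intro b hb hbq
  obtain ⟨i, -, rfl⟩ := mem_image.1 hb
  obtain ⟨j, -, hj⟩ := mem_image.1 hbq
  by_cases hij : i = j
  · subst hij
    exact hβF i (mem_range_algebraMap_of_pow_card_eq_self (hF ▸ hj.symm))
  · exact (hβ i j hij).2 hj

theorem algebraMap_sum_smul_xlWord (hE : ∀ i j x, algebraMap F K (E i j x) = ePoly K q i j x)
    (c : xlIndex m ℓ → F) (p : Fin t ⊕ Fin r) :
    algebraMap F K ((∑ k, c k • xlWord α β E m ℓ k) p) =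
      (xlComb q (algebraMap F K ∘ c)).eval (Sum.elim α β p) := by
  simp [xlComb, xlWord, eval_finsetSum, Finset.sum_apply, hE, eval_xlPoly, Algebra.smul_def]

theorem isRoot_xlComb_of_sum_smul_xlWord_eq_zero
    (hE : ∀ i j x, algebraMap F K (E i j x) = ePoly K q i j x) {c : xlIndex m ℓ → F}
    {p : Fin t ⊕ Fin r} (hp : (∑ k, c k • xlWord α β E m ℓ k) p = 0) :
    (xlComb q (algebraMap F K ∘ c)).IsRoot (Sum.elim α β p) := by
  rw [IsRoot, ← algebraMap_sum_smul_xlWord hE, hp, map_zero]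

theorem linearIndependent_xlWord [Fintype F] [Fintype K] (hF : Fintype.card F = q)
    (hK : Fintype.card K = q ^ 2) (hr : 2 * r = q ^ 2 - q) (hm : 2 ≤ m) (hmq : m ≤ q - 1)
    (hℓ : ℓ ≤ m - 1) (hβF : ∀ i, β i ∉ Set.range (algebraMap F K))
    (hβ : ∀ i j, i ≠ j → β i ≠ β j ∧ β j ≠ β i ^ q)
    (hE : ∀ i j x, algebraMap F K (E i j x) = ePoly K q i j x) :
    LinearIndependent F (xlWord α β E m ℓ) := by
  classical
  refine Fintype.linearIndependent_iff.2 fun c hc => ?_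
  by_contra hne
  have hP : xlComb q (algebraMap F K ∘ c) ≠ 0 := by
    refine xlComb_ne_zero (lt_of_mem_xlIndex hm hmq hℓ) fun h => ?_
    obtain ⟨k, hk⟩ := not_forall.1 hne
    exact hk ((algebraMap F K).injective (by simpa using congrFun h k))
  have hroot (j : Fin r) : (xlComb q (algebraMap F K ∘ c)).IsRoot (β j) :=
    isRoot_xlComb_of_sum_smul_xlWord_eq_zero hE (p := Sum.inr j) (by rw [hc]; rfl)
  have hdeg := natDegree_xlComb_xlIndex_le hm hmq hℓ (algebraMap F K ∘ c)
  have hcount := card_add_two_mul_card_le_natDegree_xlComb hK hP (A := ∅) (by simp)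
    (T := univ.image β) fun b hb => ⟨pow_notMem_image_of_ne_pow hF hβF hβ univ b hb, by
      obtain ⟨j, -, rfl⟩ := mem_image.1 hb; exact hroot j⟩
  rw [card_image_of_injective _ fun i j h => by_contra fun hij => (hβ i j hij).1 h, card_univ,
    Fintype.card_fin] at hcount
  have : (m - 1) * q + q ≤ (q - 1) * q := by
    rw [← Nat.succ_mul]; exact Nat.mul_le_mul_right _ (by omega)
  have : (q - 1) * q = q ^ 2 - q := by rw [Nat.sub_mul, one_mul, sq]
  omega

end XLCode

section XLCodeDistance

variable {F K : Type*} [Field F] [Fintype F] [DecidableEq F] [Field K] [Fintype K] [Algebra F K]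
  {q t r m ℓ : ℕ} {α : Fin t → K} {β : Fin r → K} {E : ℕ → ℕ → K → F}

theorem two_mul_card_zeros_le (hF : Fintype.card F = q) (hK : Fintype.card K = q ^ 2)
    (ht : t ≤ q) (hm : 2 ≤ m) (hmq : m ≤ q - 1) (hℓ : ℓ ≤ m - 1) (hαinj : Function.Injective α)
    (hαF : ∀ i, α i ∈ Set.range (algebraMap F K)) (hβF : ∀ i, β i ∉ Set.range (algebraMap F K))
    (hβ : ∀ i j, i ≠ j → β i ≠ β j ∧ β j ≠ β i ^ q)
    (hE : ∀ i j x, algebraMap F K (E i j x) = ePoly K q i j x) {c : xlIndex m ℓ → F}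
    {v : Fin t ⊕ Fin r → F} (hv : ∑ k, c k • xlWord α β E m ℓ k = v) (hv0 : v ≠ 0) (g : ℤ)
    (hg : g = if Odd q then min (max (2 * ((m : ℤ) - 2)) ((m : ℤ) + ℓ - 1)) (t : ℤ)
      else if ℓ ≤ m - 2 then max (min ((m : ℤ) - 2) (t : ℤ)) (2 * (t : ℤ) - q)
      else max (min ((m : ℤ) - 1) (t : ℤ)) (2 * (t : ℤ) - q)) :
    2 * ((#{i | v (Sum.inl i) = 0} : ℤ) + #{j | v (Sum.inr j) = 0}) ≤
      ((m - 1) * q + ℓ : ℕ) + g := by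
  classical
  have hP : xlComb q (algebraMap F K ∘ c) ≠ 0 := fun h => hv0 <| funext fun p =>
    (algebraMap F K).injective <| by
      rw [← hv, algebraMap_sum_smul_xlWord hE, h, eval_zero, Pi.zero_apply, map_zero]
  have hroot {p : Fin t ⊕ Fin r} (hp : v p = 0) : (xlComb q (algebraMap F K ∘ c)).IsRoot
      (Sum.elim α β p) := isRoot_xlComb_of_sum_smul_xlWord_eq_zero hE (by rw [hv, hp])
  have hβinj : Function.Injective β := fun i j h => by_contra fun hij => (hβ i j hij).1 h
  have hbound := two_mul_card_add_card_le hK ht hm hmq hℓ hP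
    (A := ({i | v (Sum.inl i) = 0} : Finset _).image α)
    (T := ({j | v (Sum.inr j) = 0} : Finset _).image β) (S := univ.image (algebraMap F K))
    (fun a ha => by
      obtain ⟨i, hi, rfl⟩ := mem_image.1 ha
      exact ⟨pow_eq_self_of_mem_range_algebraMap hF (hαF i),
        hroot (p := Sum.inl i) (mem_filter.1 hi).2⟩)
    (card_image_le.trans (card_le_univ _) |>.trans_eq (Fintype.card_fin t))
    (fun a ha => by
      obtain ⟨a, -, rfl⟩ := mem_image.1 ha
      exact pow_eq_self_of_mem_range_algebraMap hF ⟨a, rfl⟩)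
    (by rw [card_image_of_injective _ (algebraMap F K).injective, card_univ, hF])
    (fun b hb => ⟨pow_notMem_image_of_ne_pow hF hβF hβ _ b hb, by
      obtain ⟨j, hj, rfl⟩ := mem_image.1 hb
      exact hroot (p := Sum.inr j) (mem_filter.1 hj).2⟩)
    g hg
  rwa [card_image_of_injective _ hαinj, card_image_of_injective _ hβinj] at hbound

end XLCodeDistance

theorem statement12_general {q t m ℓ : ℕ}
    (ht : t ≤ q) (hm2 : 2 ≤ m) (hmq : m ≤ q - 1) (hℓ : ℓ ≤ m - 1)
    (F K : Type*) [Field F] [Fintype F] [DecidableEq F]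
    [Field K] [Fintype K] [Algebra F K]
    (hF : Fintype.card F = q) (hK : Fintype.card K = q ^ 2)
    (r : ℕ) (hr : 2 * r = q ^ 2 - q)
    -- `α_1, …, α_t` are distinct elements of the subfield `F ⊆ K`
    (α : Fin t → K) (hαinj : Function.Injective α)
    (hαF : ∀ i, α i ∈ Set.range (algebraMap F K))
    -- `β_1, …, β_r` contain exactly one element of each conjugate pair in `K∖F`
    (β : Fin r → K) (hβF : ∀ i, β i ∉ Set.range (algebraMap F K))
    (hβ : ∀ i j, i ≠ j → β i ≠ β j ∧ β j ≠ β i ^ q)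
    -- the values of the `e_{i,j}` lie in `F`; `E` is the `F`-valued evaluation
    (E : ℕ → ℕ → K → F)
    (hE : ∀ i j x, algebraMap F K (E i j x) = ePoly K q i j x)
    (C : Submodule F (Fin t ⊕ Fin r → F))
    (hC : C = Submodule.span F (XLgen F K α β E m ℓ))
    (g : ℤ)
    (hg : g = if Odd q then min (max (2 * ((m : ℤ) - 2)) ((m : ℤ) + ℓ - 1)) (t : ℤ)
      else if ℓ ≤ m - 2 then max (min ((m : ℤ) - 2) (t : ℤ)) (2 * (t : ℤ) - q)
      else max (min ((m : ℤ) - 1) (t : ℤ)) (2 * (t : ℤ) - q))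
    (δ : ℚ)
    (hδ : δ = (t + r : ℚ) - ((q : ℚ) * ((m : ℚ) - 1) + (ℓ : ℚ) + (g : ℚ)) / 2) :
    Module.finrank F C = m * (m - 1) / 2 + ℓ + 1 ∧
    ∀ v ∈ C, v ≠ 0 → δ ≤ (hammingNorm v : ℚ) := by
  rw [XLgen_eq_range_xlWord hm2 hℓ] at hC
  subst hC
  refine ⟨?_, fun v hv hv0 => ?_⟩
  · rw [finrank_span_eq_card (linearIndependent_xlWord hF hK hr hm2 hmq hℓ hβF hβ hE),
      Fintype.card_coe, card_xlIndex hm2 (by omega)]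
  obtain ⟨c, hc⟩ := (Submodule.mem_span_range_iff_exists_fun F).1 hv
  have hzeros : (2 * (#{i | v (Sum.inl i) = 0} + #{j | v (Sum.inr j) = 0}) : ℚ) ≤
      (m - 1) * q + ℓ + g := by
    have := two_mul_card_zeros_le hF hK ht hm2 hmq hℓ hαinj hαF hβF hβ hE hc hv0 g hg
    push_cast [Nat.cast_sub (by omega : 1 ≤ m)] at this
    exact_mod_cast this
  have hwt : (hammingNorm v + #{i | v (Sum.inl i) = 0} + #{j | v (Sum.inr j) = 0} : ℚ) = t + r := by
    exact_mod_cast (hammingNorm_add_card_zeros v).trans (by simp)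
  rw [hδ]
  linarith

/-- **Xing–Ling**: for `0 ≤ t ≤ q`, `2 ≤ m ≤ q−1`, `0 ≤ ℓ ≤ m−1`, the code
`C_q(t,m,ℓ)` is a linear code over `F_q` of length `n = t + (q²−q)/2`, dimension
`m(m−1)/2 + ℓ + 1`, and minimum distance at least
`δ = n − (q(m−1) + ℓ + g)/2`, with `g` as in the statement. -/
theorem statement12 {q t m ℓ : ℕ}
    (hq : ∃ p e : ℕ, p.Prime ∧ 0 < e ∧ q = p ^ e)
    (ht : t ≤ q) (hm2 : 2 ≤ m) (hmq : m ≤ q - 1) (hℓ : ℓ ≤ m - 1)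
    (F K : Type*) [Field F] [Fintype F] [DecidableEq F]
    [Field K] [Fintype K] [Algebra F K]
    (hF : Fintype.card F = q) (hK : Fintype.card K = q ^ 2)
    (r : ℕ) (hr : 2 * r = q ^ 2 - q)
    -- `α_1, …, α_t` are distinct elements of the subfield `F ⊆ K`
    (α : Fin t → K) (hαinj : Function.Injective α)
    (hαF : ∀ i, α i ∈ Set.range (algebraMap F K))
    -- `β_1, …, β_r` contain exactly one element of each conjugate pair in `K∖F`
    (β : Fin r → K) (hβF : ∀ i, β i ∉ Set.range (algebraMap F K))
    (hβ : ∀ i j, i ≠ j → β i ≠ β j ∧ β j ≠ β i ^ q)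
    -- the values of the `e_{i,j}` lie in `F`; `E` is the `F`-valued evaluation
    (E : ℕ → ℕ → K → F)
    (hE : ∀ i j x, algebraMap F K (E i j x) = ePoly K q i j x)
    (C : Submodule F (Fin t ⊕ Fin r → F))
    (hC : C = Submodule.span F (XLgen F K α β E m ℓ))
    (g : ℤ)
    (hg : g = if Odd q then min (max (2 * ((m : ℤ) - 2)) ((m : ℤ) + ℓ - 1)) (t : ℤ)
      else if ℓ ≤ m - 2 then max (min ((m : ℤ) - 2) (t : ℤ)) (2 * (t : ℤ) - q)
      else max (min ((m : ℤ) - 1) (t : ℤ)) (2 * (t : ℤ) - q))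
    (δ : ℚ)
    (hδ : δ = (t + r : ℚ) - ((q : ℚ) * ((m : ℚ) - 1) + (ℓ : ℚ) + (g : ℚ)) / 2) :
    Module.finrank F C = m * (m - 1) / 2 + ℓ + 1 ∧
    ∀ v ∈ C, v ≠ 0 → δ ≤ (hammingNorm v : ℚ) :=
  statement12_general ht hm2 hmq hℓ F K hF hK r hr α hαinj hαF β hβF hβ E hE C hC g hg δ hδ
end
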